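/- arXiv:math/9912103 — 4 statements merged into one kernel-verified Lean document; each statement's English description precedes it below -/
import Mathlib

section
/- Let $c > 1$ and let $a : \mathbb{N} \to \mathbb{N}$ be a sequence of positive integers with $a(n+1) > c \cdot a(n)$ for all $n$. Let $s \ge 2$ and let $z_1 > z_2 > \cdots > z_s$ be positive integers. Then for any integers $b, d$ and any $N \ge 1$, the number of integer vectors $(y_1, \dots, y_s)$ with $|y_i| \le N$ satisfying both $|y_1 a(z_1) + \cdots + y_s a(z_s) + b| \le a(z_1)$ and $y_1 + \cdots + y_s + d = 0$ is at most $c'(s,c) \cdot N^{s-2}$ for some constant $c'(s,c)$ depending only on $s$ and $c$. -/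
/-!
Eliminate `y 1` through the linear relation `∑ y i = -d`. The slab condition then reads
`|y 0 * (a (z 0) - a (z 1)) + B| ≤ a (z 0)`, where `B` depends only on `y 2, …, y (s-1)`.
Lacunarity gives `a (z 0) - a (z 1) > (1 - 1/c) a (z 0)`, so once those `s - 2` coordinates are
fixed (at most `(2N+1)^(s-2)` ways) there are at most `2c/(c-1) + 1` choices of `y 0`, and `y 1`
is determined.
-/

open Finset

section Lacunary

variable {c : ℝ} {a : ℕ → ℕ}

theorem strictMono_of_lacunary (hc : 1 ≤ c) (ha : ∀ n, c * a n < a (n + 1)) : StrictMono a :=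
  strictMono_nat_of_lt_succ fun n => by
    have : (a n : ℝ) < a (n + 1) := by nlinarith [ha n, (Nat.cast_nonneg (a n) : (0 : ℝ) ≤ a n)]
    exact_mod_cast this

theorem lacunary_mul_lt (hc : 1 ≤ c) (ha : ∀ n, c * a n < a (n + 1)) {m n : ℕ} (hmn : m < n) :
    c * a m < a n :=
  (ha m).trans_le <| by exact_mod_cast (strictMono_of_lacunary hc ha).monotone hmn

theorem lacunary_sub_gap (hc : 1 ≤ c) (ha : ∀ n, c * a n < a (n + 1)) {m n : ℕ} (hmn : m < n) :
    (c - 1) * a n < c * ((a n : ℝ) - a m) := by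
  nlinarith [lacunary_mul_lt hc ha hmn]

end Lacunary

theorem sum_mul_eq_of_sum_add_eq_zero {n : ℕ} (y w : Fin (n + 2) → ℤ) {d : ℤ}
    (hsum : ∑ i, y i + d = 0) :
    ∑ i, y i * w i =
      y 0 * (w 0 - w 1) + ∑ i : Fin n, y i.succ.succ * (w i.succ.succ - w 1) - d * w 1 := by
  simp only [Fin.sum_univ_succ, Fin.succ_zero_eq_one, mul_sub, sum_sub_distrib, ← sum_mul] at hsum ⊢
  linear_combination (w 1) * hsum

theorem eq_of_sum_add_eq_zero {n : ℕ} {y y' : Fin (n + 2) → ℤ} {d : ℤ}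
    (hy : ∑ i, y i + d = 0) (hy' : ∑ i, y' i + d = 0) (h0 : y 0 = y' 0)
    (htail : ∀ i : Fin n, y i.succ.succ = y' i.succ.succ) : y = y' := by
  have h1 : y 1 = y' 1 := by
    simp only [Fin.sum_univ_succ, Fin.succ_zero_eq_one, htail] at hy hy'
    linarith
  funext i
  refine Fin.cases h0 (fun j => Fin.cases ?_ (fun k => htail k) j) i
  simpa using h1

theorem card_filter_abs_mul_add_le (I : Finset ℤ) {A : ℤ} (hA : 0 < A) (B : ℤ) {M : ℤ}
    (hM : 0 ≤ M) : (#{k ∈ I | |k * A + B| ≤ M} : ℤ) * A ≤ 2 * M + A := by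
  have hsub : {k ∈ I | |k * A + B| ≤ M} ⊆ Icc (-((M + B) / A)) ((M - B) / A) := by
    intro k hk
    obtain ⟨hlo, hhi⟩ := abs_le.mp (mem_filter.mp hk).2
    rw [mem_Icc, neg_le, Int.le_ediv_iff_mul_le hA, Int.le_ediv_iff_mul_le hA]
    constructor <;> linarith
  have hcard := (card_le_card hsub).trans_eq (Int.card_Icc _ _)
  have h1 := Int.ediv_mul_le (M + B) hA.ne'
  have h2 := Int.ediv_mul_le (M - B) hA.ne'
  rcases le_or_gt 0 ((M - B) / A + 1 + (M + B) / A) with hlen | hlen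
  · calc (#{k ∈ I | |k * A + B| ≤ M} : ℤ) * A ≤ ((M - B) / A + 1 + (M + B) / A) * A := by
          gcongr; omega
      _ ≤ 2 * M + A := by linarith
  · have : #{k ∈ I | |k * A + B| ≤ M} = 0 := by omega
    simp only [this, Nat.cast_zero, zero_mul]
    omega

theorem card_box_solutions_mul_le {n : ℕ} (w : Fin (n + 2) → ℤ) (hw : w 1 < w 0) {M : ℤ}
    (hM : 0 ≤ M) (b d : ℤ) (N : ℕ) :
    (#{y ∈ Fintype.piFinset fun _ : Fin (n + 2) => Icc (-(N : ℤ)) N |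
        |∑ i, y i * w i + b| ≤ M ∧ ∑ i, y i + d = 0} : ℤ) * (w 0 - w 1) ≤
      (2 * M + (w 0 - w 1)) * (2 * N + 1) ^ n := by
  set A := w 0 - w 1
  have hA : 0 < A := sub_pos.mpr hw
  set S := {y ∈ Fintype.piFinset fun _ : Fin (n + 2) => Icc (-(N : ℤ)) N |
    |∑ i, y i * w i + b| ≤ M ∧ ∑ i, y i + d = 0}
  set box := Fintype.piFinset fun _ : Fin n => Icc (-(N : ℤ)) N
  let tail₂ : (Fin (n + 2) → ℤ) → Fin n → ℤ := fun y i => y i.succ.succ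
  have hmaps : ∀ y ∈ S, tail₂ y ∈ box := fun y hy => by
    simp only [S, box, mem_filter, Fintype.mem_piFinset] at hy ⊢
    exact fun i => hy.1 _
  have hfiber : ∀ r ∈ box, (#{y ∈ S | tail₂ y = r} : ℤ) * A ≤ 2 * M + A := by
    intro r _
    set B := ∑ i, r i * (w i.succ.succ - w 1) + b - d * w 1
    have hcard : #{y ∈ S | tail₂ y = r} ≤ #{k ∈ Icc (-(N : ℤ)) N | |k * A + B| ≤ M} := by
      refine card_le_card_of_injOn (· 0) (fun y hy => ?_) (fun y hy y' hy' h0 => ?_)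
      · simp only [S, mem_filter, Fintype.mem_piFinset, coe_filter, Set.mem_ofPred_eq] at hy ⊢
        obtain ⟨⟨hbox, hslab, hsum⟩, rfl⟩ := hy
        have hlin : y 0 * A + B = ∑ i, y i * w i + b := by
          rw [sum_mul_eq_of_sum_add_eq_zero y w hsum]; ring
        exact ⟨hbox 0, hlin ▸ hslab⟩
      · simp only [S, mem_filter, coe_filter, Set.mem_ofPred_eq] at hy hy'
        exact eq_of_sum_add_eq_zero hy.1.2.2 hy'.1.2.2 h0
          fun i => congrFun (hy.2.trans hy'.2.symm) i
    calc (#{y ∈ S | tail₂ y = r} : ℤ) * A ≤ #{k ∈ Icc (-(N : ℤ)) N | |k * A + B| ≤ M} * A := by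
          gcongr
      _ ≤ 2 * M + A := card_filter_abs_mul_add_le _ hA B hM
  calc (#S : ℤ) * A = ∑ r ∈ box, (#{y ∈ S | tail₂ y = r} : ℤ) * A := by
        rw [card_eq_sum_card_fiberwise hmaps, Nat.cast_sum, sum_mul]
    _ ≤ ∑ _r ∈ box, (2 * M + A) := sum_le_sum hfiber
    _ = (2 * M + A) * (2 * N + 1) ^ n := by
        rw [sum_const, Fintype.card_piFinset, prod_const, Int.card_Icc, card_univ,
          Fintype.card_fin, nsmul_eq_mul, mul_comm]
        push_cast
        congr 2
        omega

theorem card_box_solutions_le {c : ℝ} (hc : 1 < c) {n : ℕ} (w : Fin (n + 2) → ℤ) (hw : 0 ≤ w 0)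
    (hgap : (c - 1) * w 0 < c * (w 0 - w 1)) (b d : ℤ) (N : ℕ) :
    (#{y ∈ Fintype.piFinset fun _ : Fin (n + 2) => Icc (-(N : ℤ)) N |
        |∑ i, y i * w i + b| ≤ w 0 ∧ ∑ i, y i + d = 0} : ℝ) ≤
      (2 * c / (c - 1) + 1) * (2 * N + 1) ^ n := by
  have hc1 : 0 < c - 1 := by linarith
  have hA : (0 : ℝ) < w 0 - w 1 := by
    have : (0 : ℝ) ≤ (c - 1) * w 0 := by positivity
    nlinarith
  have hcount := (Int.cast_le (R := ℝ)).mpr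
    (card_box_solutions_mul_le w (by exact_mod_cast sub_pos.mp hA) hw b d N)
  push_cast at hcount
  rw [div_add_one hc1.ne', div_mul_eq_mul_div, le_div_iff₀ hc1]
  refine le_of_mul_le_mul_right ?_ hA
  nlinarith [pow_nonneg (by positivity : (0 : ℝ) ≤ 2 * N + 1) n]

/-- For a lacunary sequence `a` with ratio `c > 1` and `z 0 > z 1 > ⋯ > z (s-1) ≥ 1`,
the number of integer vectors `y` with `|y i| ≤ N`, `|∑ y i * a (z i) + b| ≤ a (z 0)`
and `∑ y i + d = 0` is `O_{s,c}(N^(s-2))`. -/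
theorem stmt1 (c : ℝ) (hc : 1 < c) (s : ℕ) (hs : 2 ≤ s) :
    ∃ κ : ℝ, ∀ (a : ℕ → ℕ), (∀ n, 0 < a n) → (∀ n, c * a n < a (n + 1)) →
      ∀ (z : Fin s → ℕ), StrictAnti z → (∀ i, 0 < z i) →
      ∀ (b d : ℤ) (N : ℕ), 1 ≤ N →
        (Set.ncard {y : Fin s → ℤ | (∀ i, |y i| ≤ (N : ℤ)) ∧
            |(∑ i, y i * (a (z i) : ℤ)) + b| ≤ (a (z ⟨0, by omega⟩) : ℤ) ∧
            (∑ i, y i) + d = 0} : ℝ)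
          ≤ κ * (N : ℝ) ^ (s - 2) := by
  obtain ⟨n, rfl⟩ : ∃ n, s = n + 2 := ⟨s - 2, by omega⟩
  refine ⟨(2 * c / (c - 1) + 1) * 3 ^ n, fun a _ hlac z hz _ b d N hN => ?_⟩
  have hz01 : z 1 < z 0 := hz (by simp)
  have hcount := card_box_solutions_le hc (fun i => (a (z i) : ℤ)) (Nat.cast_nonneg _)
    (by exact_mod_cast lacunary_sub_gap hc.le hlac hz01) b d N
  have hκ : 0 ≤ 2 * c / (c - 1) + 1 := by
    have : 0 < c - 1 := by linarith
    positivity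
  calc _ = _ := by
        rw [← Set.ncard_coe_finset]
        congr
        ext y
        simp [abs_le]
    _ ≤ (2 * c / (c - 1) + 1) * (2 * N + 1) ^ n := hcount
    _ ≤ (2 * c / (c - 1) + 1) * (3 ^ n * (N : ℝ) ^ n) := by
        rw [← mul_pow]
        gcongr
        linarith [(Nat.one_le_cast (α := ℝ)).mpr hN]
    _ = _ := by rw [Nat.add_sub_cancel, mul_assoc]
end

section
/- Let $c > 1$ and let $a : \mathbb{N} \to \mathbb{N}$ satisfy $a(n+1) > c \cdot a(n)$ for all $n$. Let $r \ge 1$ be an integer. Then for any $N \ge 2$, the number of tuples $(y_1, \dots, y_r, z_1, \dots, z_r)$ with $y_i \in \mathbb{Z}$ not all zero, $z_1, \dots, z_r$ distinct positive integers, all $|y_i| \le N$ and $z_i \le N$, satisfying $y_1 a(z_1) + \cdots + y_r a(z_r) = 0$ and $y_1 + \cdots + y_r = 0$, is at most $C(r,c) \cdot N^{r-1} (\log N)^{r-1}$ for some constant $C(r,c)$. -/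
open Finset

namespace St2

variable {r : ℕ}

abbrev Pt (r : ℕ) := (Fin r → ℤ) × (Fin r → ℕ)

def supp (p : Pt r) : Finset (Fin r) := univ.filter fun i => p.1 i ≠ 0

lemma mem_supp {p : Pt r} {i : Fin r} : i ∈ supp p ↔ p.1 i ≠ 0 := by simp [supp]

def abv (p : Pt r) (i : Fin r) : Finset (Fin r) := (supp p).filter fun j => p.2 i < p.2 j
def blw (p : Pt r) (i : Fin r) : Finset (Fin r) := (supp p).filter fun j => p.2 j < p.2 i
def rk (p : Pt r) (i : Fin r) : ℕ := (abv p i).card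

lemma mem_abv {p : Pt r} {i j : Fin r} : j ∈ abv p i ↔ j ∈ supp p ∧ p.2 i < p.2 j := by
  simp [abv]

lemma mem_blw {p : Pt r} {i j : Fin r} : j ∈ blw p i ↔ j ∈ supp p ∧ p.2 j < p.2 i := by
  simp [blw]

lemma rk_lt_r (p : Pt r) (i : Fin r) : rk p i < r := by
  have h1 : abv p i ⊆ univ.erase i := by
    intro j hj
    rw [mem_abv] at hj
    refine Finset.mem_erase.2 ⟨?_, mem_univ _⟩
    rintro rfl; exact lt_irrefl _ hj.2
  have h2 : rk p i ≤ (univ.erase i).card := card_le_card h1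
  rw [Finset.card_erase_of_mem (mem_univ i), Finset.card_univ, Fintype.card_fin] at h2
  have : 0 < r := i.pos
  omega

lemma rk_lt_rk {p : Pt r} {i j : Fin r} (hj : j ∈ supp p) (h : p.2 i < p.2 j) :
    rk p j < rk p i := by
  apply card_lt_card
  rw [Finset.ssubset_iff_of_subset]
  · exact ⟨j, mem_abv.2 ⟨hj, h⟩, by simp [mem_abv]⟩
  · intro k hk
    rw [mem_abv] at *
    exact ⟨hk.1, h.trans hk.2⟩

lemma rk_inj {p : Pt r} (hz : Function.Injective p.2) {i j : Fin r}
    (hi : i ∈ supp p) (hj : j ∈ supp p) (h : rk p i = rk p j) : i = j := by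
  rcases lt_trichotomy (p.2 i) (p.2 j) with hlt | heq | hgt
  · exact absurd h (by have := rk_lt_rk hj hlt; omega)
  · exact hz heq
  · exact absurd h (by have := rk_lt_rk hi hgt; omega)

lemma rk_card {p : Pt r} (hz : Function.Injective p.2) {i : Fin r} (hi : i ∈ supp p) :
    rk p i + (blw p i).card + 1 = (supp p).card := by
  classical
  have hcard : ((supp p).filter (fun j => p.2 i < p.2 j)).card
      + ((supp p).filter (fun j => ¬ p.2 i < p.2 j)).card = (supp p).card :=
    card_filter_add_card_filter_not _
  have h2 : (supp p).filter (fun j => ¬ p.2 i < p.2 j) = insert i (blw p i) := by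
    ext j
    simp only [mem_filter, mem_insert, mem_blw, not_lt]
    constructor
    · rintro ⟨hjs, hle⟩
      rcases lt_or_eq_of_le hle with hlt | heq
      · exact Or.inr ⟨hjs, hlt⟩
      · exact Or.inl (hz heq)
    · rintro (rfl | ⟨hjs, hb⟩)
      · exact ⟨hi, le_rfl⟩
      · exact ⟨hjs, le_of_lt hb⟩
  have h3 : i ∉ blw p i := by simp [mem_blw]
  rw [h2, card_insert_of_notMem h3] at hcard
  unfold rk abv
  omega

lemma exists_rk {p : Pt r} (hz : Function.Injective p.2) {k : ℕ} (hk : k < (supp p).card) :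
    ∃ i ∈ supp p, rk p i = k := by
  classical
  have hinj : Set.InjOn (rk p) (supp p) := fun i hi j hj h => rk_inj hz hi hj h
  have himg : (supp p).image (rk p) = Finset.range (supp p).card := by
    apply Finset.eq_of_subset_of_card_le
    · intro x hx
      rw [mem_image] at hx
      obtain ⟨i, hi, rfl⟩ := hx
      rw [Finset.mem_range]
      have := rk_card hz hi
      omega
    · rw [Finset.card_range, Finset.card_image_of_injOn hinj]
  have : k ∈ (supp p).image (rk p) := by rw [himg]; exact mem_range.2 hk
  simpa [mem_image] using this

def predz (p : Pt r) (i : Fin r) : ℕ := WithTop.untopD 0 (((abv p i).image p.2).min)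

lemma predz_eq {p : Pt r} {i : Fin r} (h : (abv p i).Nonempty) :
    predz p i = ((abv p i).image p.2).min' (h.image _) := by
  unfold predz
  rw [← Finset.coe_min' (h.image _)]
  rfl

lemma pred_spec {p : Pt r} (hz : Function.Injective p.2) {i : Fin r} (h : (abv p i).Nonempty) :
    ∃ j ∈ abv p i, p.2 j = predz p i ∧ (∀ k ∈ abv p i, p.2 j ≤ p.2 k) ∧ rk p j + 1 = rk p i := by
  have hne : ((abv p i).image p.2).Nonempty := h.image _
  have hmem := Finset.min'_mem _ hne
  obtain ⟨j, hj, hjz⟩ := Finset.mem_image.1 hmem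
  have hmin : ∀ k ∈ abv p i, p.2 j ≤ p.2 k := by
    intro k hk
    rw [hjz]
    exact Finset.min'_le _ _ (mem_image_of_mem _ hk)
  refine ⟨j, hj, by rw [predz_eq h, hjz], hmin, ?_⟩
  have he : abv p j = (abv p i).erase j := by
    ext k
    rw [Finset.mem_erase, mem_abv, mem_abv]
    constructor
    · rintro ⟨hks, hkz⟩
      have hij : p.2 i < p.2 j := (mem_abv.1 hj).2
      exact ⟨by rintro rfl; exact lt_irrefl _ hkz, hks, hij.trans hkz⟩
    · rintro ⟨hne', hks, hkz⟩
      refine ⟨hks, ?_⟩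
      have hle : p.2 j ≤ p.2 k := hmin k (mem_abv.2 ⟨hks, hkz⟩)
      rcases lt_or_eq_of_le hle with hlt | heq
      · exact hlt
      · exact absurd (hz heq.symm) (by exact fun hh => hne' hh)
  unfold rk
  rw [he, card_erase_of_mem hj]
  have : 0 < (abv p i).card := card_pos.2 h
  omega

lemma succ_spec {p : Pt r} (hz : Function.Injective p.2) {i : Fin r} (hi : i ∈ supp p)
    (hb : (blw p i).Nonempty) :
    ∃ j ∈ blw p i, (∀ k ∈ blw p i, p.2 k ≤ p.2 j) ∧ rk p j = rk p i + 1 ∧ predz p j = p.2 i := by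
  obtain ⟨j, hj, hmax⟩ := Finset.exists_max_image (blw p i) p.2 hb
  have hji : p.2 j < p.2 i := (mem_blw.1 hj).2
  have habv : abv p j = insert i (abv p i) := by
    ext k
    rw [mem_insert, mem_abv, mem_abv]
    constructor
    · rintro ⟨hks, hkz⟩
      rcases lt_trichotomy (p.2 k) (p.2 i) with hlt | heq | hgt
      · exact absurd hkz (by have := hmax k (mem_blw.2 ⟨hks, hlt⟩); omega)
      · exact Or.inl (hz heq)
      · exact Or.inr ⟨hks, hgt⟩
    · rintro (rfl | ⟨hks, hkz⟩)
      · exact ⟨hi, hji⟩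
      · exact ⟨hks, hji.trans hkz⟩
  have hnotmem : i ∉ abv p i := by simp [mem_abv]
  have hrk : rk p j = rk p i + 1 := by
    unfold rk
    rw [habv, card_insert_of_notMem hnotmem]
  refine ⟨j, hj, hmax, hrk, ?_⟩
  have hne : (abv p j).Nonempty := ⟨i, by rw [habv]; exact mem_insert_self _ _⟩
  rw [predz_eq hne]
  apply le_antisymm
  · exact Finset.min'_le _ _ (mem_image_of_mem _ (by rw [habv]; exact mem_insert_self _ _))
  · apply Finset.le_min'
    intro y hy
    obtain ⟨k, hk, rfl⟩ := Finset.mem_image.1 hy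
    rw [habv, mem_insert] at hk
    rcases hk with rfl | hk
    · exact le_rfl
    · exact le_of_lt (mem_abv.1 hk).2

def fresh (L : ℕ) (p : Pt r) (i : Fin r) : Prop :=
  ∀ j ∈ supp p, p.2 i < p.2 j → p.2 i + L < p.2 j

def bt (L : ℕ) (p : Pt r) (i : Fin r) : Prop :=
  ∀ j ∈ supp p, p.2 j < p.2 i → p.2 j + L < p.2 i

def isMin (p : Pt r) (i : Fin r) : Prop := blw p i = ∅
def isMin2 (p : Pt r) (i : Fin r) : Prop := (blw p i).card = 1
def caseA (L : ℕ) (p : Pt r) : Prop := ∃ i ∈ supp p, isMin p i ∧ ¬ fresh L p i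

instance (L : ℕ) (p : Pt r) (i : Fin r) : Decidable (fresh L p i) := by
  unfold fresh; infer_instance
instance (L : ℕ) (p : Pt r) (i : Fin r) : Decidable (bt L p i) := by
  unfold bt; infer_instance
instance (p : Pt r) (i : Fin r) : Decidable (isMin p i) := by
  unfold isMin; infer_instance
instance (p : Pt r) (i : Fin r) : Decidable (isMin2 p i) := by
  unfold isMin2; infer_instance
instance (L : ℕ) (p : Pt r) : Decidable (caseA L p) := by
  unfold caseA; infer_instance

def ZF (L : ℕ) (p : Pt r) : Finset (Fin r) :=
  univ.filter fun i => i ∉ supp p ∨ (fresh L p i ∧ ¬ isMin p i)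
def ZG (L : ℕ) (p : Pt r) : Finset (Fin r) := (supp p).filter fun i => ¬ fresh L p i
def YF (L : ℕ) (p : Pt r) : Finset (Fin r) :=
  (supp p).filter fun i => ¬ bt L p i ∧ ¬ (caseA L p ∧ isMin2 p i)


def zrec (L : ℕ) (p : Pt r) (i : Fin r) : ℕ :=
  if i ∈ ZF L p then p.2 i else if i ∈ ZG L p then predz p i - p.2 i else 0
def yrec (L : ℕ) (p : Pt r) (i : Fin r) : ℤ := if i ∈ YF L p then p.1 i else 0
def prec (p : Pt r) (i : Fin r) : ℤ := p.1 i % 2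

abbrev Flag (r : ℕ) :=
  Finset (Fin r) × (Fin r → Fin (r+1)) × Finset (Fin r) × Finset (Fin r) × Finset (Fin r)

lemma rk_lt_r' (p : Pt r) (i : Fin r) : rk p i < r + 1 := by
  have : rk p i ≤ (supp p).card := card_le_card (filter_subset _ _)
  have h2 : (supp p).card ≤ r := by
    have := card_le_card (subset_univ (supp p)); simpa using this
  omega

def flags (L : ℕ) (p : Pt r) : Flag r :=
  (supp p, fun i => ⟨rk p i, rk_lt_r' p i⟩, ZF L p, ZG L p, YF L p)

abbrev Rec (r : ℕ) := (Fin r → ℕ) × (Fin r → ℤ) × (Fin r → ℤ)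

def recd (L : ℕ) (p : Pt r) : Rec r := (zrec L p, yrec L p, prec p)

def Sol (a : ℕ → ℕ) (N : ℕ) (p : Pt r) : Prop :=
  p.1 ≠ 0 ∧ Function.Injective p.2 ∧
    (∀ i, |p.1 i| ≤ (N : ℤ)) ∧ (∀ i, 1 ≤ p.2 i ∧ p.2 i ≤ N) ∧
    (∑ i, p.1 i * (a (p.2 i) : ℤ)) = 0 ∧ (∑ i, p.1 i) = 0

lemma sum_supp (p : Pt r) (g : Fin r → ℤ) :
    ∑ i ∈ supp p, p.1 i * g i = ∑ i : Fin r, p.1 i * g i := by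
  apply Finset.sum_subset (subset_univ _)
  intro i _ hi
  simp only [supp, mem_filter, mem_univ, true_and, not_not] at hi
  rw [hi, zero_mul]

lemma sum_supp' (p : Pt r) : ∑ i ∈ supp p, p.1 i = ∑ i : Fin r, p.1 i := by
  apply Finset.sum_subset (subset_univ _)
  intro i _ hi
  simp only [supp, mem_filter, mem_univ, true_and, not_not] at hi
  exact hi

def tl (a : ℕ → ℕ) (p : Pt r) (m : ℕ) : ℤ :=
  ∑ j ∈ (supp p).filter fun j => m ≤ rk p j, p.1 j * (a (p.2 j) : ℤ)

lemma tl_eq_neg_head (a : ℕ → ℕ) {p : Pt r} (h5 : (∑ i, p.1 i * (a (p.2 i) : ℤ)) = 0) (k : ℕ) :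
    tl a p k = - ∑ j ∈ (supp p).filter fun j => rk p j < k, p.1 j * (a (p.2 j) : ℤ) := by
  have hsplit := Finset.sum_filter_add_sum_filter_not (supp p) (fun j => k ≤ rk p j)
    (fun j => p.1 j * (a (p.2 j) : ℤ))
  have hname : (supp p).filter (fun j => ¬ k ≤ rk p j) = (supp p).filter fun j => rk p j < k := by
    apply filter_congr; intro x _; simp [Nat.not_le]
  rw [hname] at hsplit
  rw [sum_supp, h5] at hsplit
  unfold tl
  linarith

lemma tl_step (a : ℕ → ℕ) {p : Pt r} (hz : Function.Injective p.2) {i : Fin r}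
    (hi : i ∈ supp p) :
    tl a p (rk p i) = p.1 i * (a (p.2 i) : ℤ) + tl a p (rk p i + 1) := by
  have hset : (supp p).filter (fun j => rk p i ≤ rk p j)
      = insert i ((supp p).filter fun j => rk p i + 1 ≤ rk p j) := by
    ext j
    simp only [mem_filter, mem_insert]
    constructor
    · rintro ⟨hjs, hle⟩
      rcases Nat.lt_or_ge (rk p i) (rk p j) with hlt | hge
      · exact Or.inr ⟨hjs, hlt⟩
      · exact Or.inl (rk_inj hz hjs hi (by omega))
    · rintro (rfl | ⟨hjs, h1⟩)
      · exact ⟨hi, le_rfl⟩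
      · exact ⟨hjs, by omega⟩
  unfold tl
  rw [hset, Finset.sum_insert (by simp only [mem_filter]; omega)]

lemma tl_bound {a : ℕ → ℕ} {N : ℕ} {p : Pt r} (hz : Function.Injective p.2)
    (hy : ∀ i, |p.1 i| ≤ (N : ℤ)) (hmono : Monotone a) {i : Fin r} (hi : i ∈ supp p) :
    |tl a p (rk p i)| ≤ (r : ℤ) * N * (a (p.2 i) : ℤ) := by
  unfold tl
  calc |∑ j ∈ (supp p).filter fun j => rk p i ≤ rk p j, p.1 j * (a (p.2 j) : ℤ)|
      ≤ ∑ j ∈ (supp p).filter fun j => rk p i ≤ rk p j, |p.1 j * (a (p.2 j) : ℤ)| :=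
        Finset.abs_sum_le_sum_abs _ _
    _ ≤ ∑ _j ∈ (supp p).filter fun j => rk p i ≤ rk p j, (N : ℤ) * (a (p.2 i) : ℤ) := by
        apply Finset.sum_le_sum
        intro j hj
        rw [mem_filter] at hj
        have hzle : p.2 j ≤ p.2 i := by
          by_contra hcon
          push_neg at hcon
          have := rk_lt_rk hj.1 hcon
          omega
        have h1 : |p.1 j * (a (p.2 j) : ℤ)| = |p.1 j| * (a (p.2 j) : ℤ) := by
          rw [abs_mul, abs_of_nonneg (show (0:ℤ) ≤ (a (p.2 j) : ℤ) from Int.natCast_nonneg _)]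
        rw [h1]
        have h2 : (a (p.2 j) : ℤ) ≤ (a (p.2 i) : ℤ) := by exact_mod_cast hmono hzle
        have h3 : (0:ℤ) ≤ |p.1 j| := abs_nonneg _
        have h4 := hy j
        nlinarith [Int.natCast_nonneg (a (p.2 j))]
    _ = (((supp p).filter fun j => rk p i ≤ rk p j).card : ℤ) * ((N : ℤ) * (a (p.2 i) : ℤ)) := by
        rw [Finset.sum_const, nsmul_eq_mul]
    _ ≤ (r : ℤ) * N * (a (p.2 i) : ℤ) := by
        have hcard : ((supp p).filter fun j => rk p i ≤ rk p j).card ≤ r := by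
          have h1 : ((supp p).filter fun j => rk p i ≤ rk p j).card ≤ (supp p).card :=
            card_le_card (filter_subset _ _)
          have h2 : (supp p).card ≤ r := by
            have := card_le_card (subset_univ (supp p)); simpa using this
          omega
        have h5 : (0:ℤ) ≤ (N : ℤ) * (a (p.2 i) : ℤ) := by positivity
        have h6 : (((supp p).filter fun j => rk p i ≤ rk p j).card : ℤ) ≤ (r : ℤ) := by
          exact_mod_cast hcard
        nlinarith

section Growth

variable {c : ℝ} {a : ℕ → ℕ} {N L : ℕ}

lemma a_strictMono (hc : 1 < c) (ha0 : ∀ n, 0 < a n)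
    (hg : ∀ n, c * (a n : ℝ) < (a (n+1) : ℝ)) : StrictMono a := by
  apply strictMono_nat_of_lt_succ
  intro n
  have h1 : (a n : ℝ) ≤ c * (a n : ℝ) := by
    have : (0:ℝ) < (a n : ℝ) := by exact_mod_cast ha0 n
    nlinarith
  have h2 : (a n : ℝ) < (a (n+1) : ℝ) := lt_of_le_of_lt h1 (hg n)
  exact_mod_cast h2

lemma growth_pow (hc : 1 < c) (hg : ∀ n, c * (a n : ℝ) < (a (n+1) : ℝ)) (n : ℕ) :
    ∀ k : ℕ, c ^ k * (a n : ℝ) ≤ (a (n + k) : ℝ) := by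
  intro k
  induction k with
  | zero => simp
  | succ k ih =>
      have hcpos : (0:ℝ) < c := lt_trans one_pos hc
      calc c ^ (k+1) * (a n : ℝ) = c * (c ^ k * (a n : ℝ)) := by ring
        _ ≤ c * (a (n + k) : ℝ) := by
            apply mul_le_mul_of_nonneg_left ih (le_of_lt hcpos)
        _ ≤ (a (n + (k+1)) : ℝ) := by
            have := hg (n + k)
            have he : n + k + 1 = n + (k+1) := by omega
            rw [he] at this
            linarith

lemma growth_key (hc : 1 < c) (ha0 : ∀ n, 0 < a n)
    (hg : ∀ n, c * (a n : ℝ) < (a (n+1) : ℝ))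
    (hL2 : ((2 * r * N : ℕ) : ℝ) ≤ c ^ L) {n m : ℕ} (h : n + L + 1 ≤ m) :
    2 * r * N * a n ≤ a m := by
  have hmono := (a_strictMono hc ha0 hg).monotone
  have h1 : c ^ (L+1) * (a n : ℝ) ≤ (a (n + (L+1)) : ℝ) := growth_pow hc hg n (L+1)
  have h2 : (a (n + (L+1)) : ℝ) ≤ (a m : ℝ) := by
    exact_mod_cast hmono (by omega : n + (L+1) ≤ m)
  have hcpos : (0:ℝ) < c := lt_trans one_pos hc
  have hpow : c ^ L ≤ c ^ (L+1) := by
    calc c ^ L = c ^ L * 1 := by ring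
      _ ≤ c ^ L * c := by nlinarith [pow_pos hcpos L]
      _ = c ^ (L+1) := by ring
  have hanpos : (0:ℝ) ≤ (a n : ℝ) := Nat.cast_nonneg _
  have hchain : ((2 * r * N : ℕ) : ℝ) * (a n : ℝ) ≤ (a m : ℝ) := by
    calc ((2 * r * N : ℕ) : ℝ) * (a n : ℝ) ≤ c ^ L * (a n : ℝ) := by
          apply mul_le_mul_of_nonneg_right hL2 hanpos
      _ ≤ c ^ (L+1) * (a n : ℝ) := mul_le_mul_of_nonneg_right hpow hanpos
      _ ≤ (a (n + (L+1)) : ℝ) := h1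
      _ ≤ (a m : ℝ) := h2
  have : ((2 * r * N * a n : ℕ) : ℝ) ≤ ((a m : ℕ) : ℝ) := by push_cast; push_cast at hchain; linarith
  exact_mod_cast this

lemma H1 (hc : 1 < c) (ha0 : ∀ n, 0 < a n)
    (hg : ∀ n, c * (a n : ℝ) < (a (n+1) : ℝ))
    (hL2 : ((2 * r * N : ℕ) : ℝ) ≤ c ^ L) {p : Pt r}
    (hz : Function.Injective p.2) (hy : ∀ i, |p.1 i| ≤ (N : ℤ)) {i : Fin r}
    (hi : i ∈ supp p) (hf : fresh L p i) (hab : (abv p i).Nonempty) :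
    2 * |tl a p (rk p i)| ≤ (a (predz p i) : ℤ) := by
  obtain ⟨j, hj, hjz, _, _⟩ := pred_spec hz hab
  have hjs := (mem_abv.1 hj).1
  have hjgt := (mem_abv.1 hj).2
  have hfar : p.2 i + L + 1 ≤ p.2 j := by
    have := hf j hjs hjgt; omega
  have hkey : 2 * r * N * a (p.2 i) ≤ a (p.2 j) := growth_key hc ha0 hg hL2 hfar
  have hb := tl_bound hz hy (a_strictMono hc ha0 hg).monotone hi
  rw [← hjz]
  have hcast : ((2 * r * N * a (p.2 i) : ℕ) : ℤ) ≤ ((a (p.2 j) : ℕ) : ℤ) := by exact_mod_cast hkey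
  push_cast at hcast
  linarith

end Growth

lemma isMin_iff {p : Pt r} (hz : Function.Injective p.2) {i : Fin r} (hi : i ∈ supp p) :
    isMin p i ↔ rk p i + 1 = (supp p).card := by
  have := rk_card hz hi
  unfold isMin
  rw [← Finset.card_eq_zero]
  omega

lemma isMin2_iff {p : Pt r} (hz : Function.Injective p.2) {i : Fin r} (hi : i ∈ supp p) :
    isMin2 p i ↔ rk p i + 2 = (supp p).card := by
  have := rk_card hz hi
  unfold isMin2
  omega

lemma mem_ZF {L : ℕ} {p : Pt r} {i : Fin r} :
    i ∈ ZF L p ↔ (i ∉ supp p ∨ (fresh L p i ∧ ¬ isMin p i)) := by simp [ZF]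

lemma mem_ZG {L : ℕ} {p : Pt r} {i : Fin r} :
    i ∈ ZG L p ↔ (i ∈ supp p ∧ ¬ fresh L p i) := by simp [ZG]

lemma mem_YF {L : ℕ} {p : Pt r} {i : Fin r} :
    i ∈ YF L p ↔ (i ∈ supp p ∧ ¬ bt L p i ∧ ¬ (caseA L p ∧ isMin2 p i)) := by simp [YF]

lemma not_fresh_iff {L : ℕ} {p : Pt r} {i : Fin r} :
    ¬ fresh L p i ↔ ∃ j ∈ supp p, p.2 i < p.2 j ∧ p.2 j ≤ p.2 i + L := by
  unfold fresh
  push_neg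
  constructor
  · rintro ⟨j, hjs, h1, h2⟩; exact ⟨j, hjs, h1, by omega⟩
  · rintro ⟨j, hjs, h1, h2⟩; exact ⟨j, hjs, h1, by omega⟩

lemma flags_supp {L : ℕ} {p q : Pt r} (h : flags L p = flags L q) : supp p = supp q :=
  congrArg Prod.fst h

lemma flags_rk {L : ℕ} {p q : Pt r} (h : flags L p = flags L q) (i : Fin r) :
    rk p i = rk q i := by
  have h2 : (flags L p).2.1 = (flags L q).2.1 := by rw [h]
  have := congrFun h2 i
  simpa [flags, Fin.ext_iff] using this

lemma flags_ZF {L : ℕ} {p q : Pt r} (h : flags L p = flags L q) : ZF L p = ZF L q := by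
  have h2 : (flags L p).2.2.1 = (flags L q).2.2.1 := by rw [h]
  simpa [flags] using h2

lemma flags_ZG {L : ℕ} {p q : Pt r} (h : flags L p = flags L q) : ZG L p = ZG L q := by
  have h2 : (flags L p).2.2.2.1 = (flags L q).2.2.2.1 := by rw [h]
  simpa [flags] using h2

lemma flags_YF {L : ℕ} {p q : Pt r} (h : flags L p = flags L q) : YF L p = YF L q := by
  have h2 : (flags L p).2.2.2.2 = (flags L q).2.2.2.2 := by rw [h]
  simpa [flags] using h2

lemma recd_z {L : ℕ} {p q : Pt r} (h : recd L p = recd L q) (i : Fin r) :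
    zrec L p i = zrec L q i := by
  have h2 : (recd L p).1 = (recd L q).1 := by rw [h]
  exact congrFun h2 i

lemma recd_y {L : ℕ} {p q : Pt r} (h : recd L p = recd L q) (i : Fin r) :
    yrec L p i = yrec L q i := by
  have h2 : (recd L p).2.1 = (recd L q).2.1 := by rw [h]
  exact congrFun h2 i

lemma recd_par {L : ℕ} {p q : Pt r} (h : recd L p = recd L q) (i : Fin r) :
    p.1 i % 2 = q.1 i % 2 := by
  have h2 : (recd L p).2.2 = (recd L q).2.2 := by rw [h]
  exact congrFun h2 i

lemma caseA_flags {L : ℕ} {p q : Pt r} (hzp : Function.Injective p.2)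
    (hzq : Function.Injective q.2) (h : flags L p = flags L q) :
    caseA L p ↔ caseA L q := by
  have hsupp := flags_supp h
  have hrk := flags_rk h
  have hZGe := flags_ZG h
  constructor
  · rintro ⟨i, hi, hm, hnf⟩
    have hig : i ∈ ZG L p := mem_ZG.2 ⟨hi, hnf⟩
    have higq : i ∈ ZG L q := hZGe ▸ hig
    refine ⟨i, hsupp ▸ hi, ?_, (mem_ZG.1 higq).2⟩
    rw [isMin_iff hzq (hsupp ▸ hi), ← hrk i, ← hsupp]
    exact (isMin_iff hzp hi).1 hm
  · rintro ⟨i, hi, hm, hnf⟩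
    have hig : i ∈ ZG L q := mem_ZG.2 ⟨hi, hnf⟩
    have higp : i ∈ ZG L p := hZGe.symm ▸ hig
    refine ⟨i, hsupp.symm ▸ hi, ?_, (mem_ZG.1 higp).2⟩
    rw [isMin_iff hzp (hsupp.symm ▸ hi), hrk i, hsupp]
    exact (isMin_iff hzq hi).1 hm

theorem inj_main {c : ℝ} {a : ℕ → ℕ} {N L : ℕ} {p q : Pt r}
    (hc : 1 < c) (ha0 : ∀ n, 0 < a n) (hg : ∀ n, c * (a n : ℝ) < (a (n+1) : ℝ))
    (hL2 : ((2 * r * N : ℕ) : ℝ) ≤ c ^ L)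
    (hp : Sol a N p) (hq : Sol a N q)
    (hFl : flags L p = flags L q) (hR : recd L p = recd L q) : p = q := by
  obtain ⟨hp1, hzp, hyp, hNp, h5p, h6p⟩ := hp
  obtain ⟨hq1, hzq, hyq, hNq, h5q, h6q⟩ := hq
  have hsupp := flags_supp hFl
  have hrk := flags_rk hFl
  have hZFe := flags_ZF hFl
  have hZGe := flags_ZG hFl
  have hYFe := flags_YF hFl
  have hAiff := caseA_flags hzp hzq hFl
  have hsc : (supp p).card = (supp q).card := by rw [hsupp]
  have key : ∀ k : ℕ, ∀ i ∈ supp p, rk p i < k →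
      ((¬ (isMin p i ∧ fresh L p i)) → p.2 i = q.2 i) ∧
      ((¬ (isMin p i ∨ (caseA L p ∧ isMin2 p i))) → p.1 i = q.1 i) := by
    intro k
    induction k with
    | zero => intro i hi h; omega
    | succ k IH =>
      intro i hi hik
      rcases Nat.lt_or_ge (rk p i) k with hlt | hge
      · exact IH i hi hlt
      have hik' : rk p i = k := by omega
      have hiq : i ∈ supp q := hsupp ▸ hi
      have hZ : (¬ (isMin p i ∧ fresh L p i)) → p.2 i = q.2 i := by
        intro hns
        by_cases hzf : i ∈ ZF L p
        · have e1 : zrec L p i = p.2 i := by unfold zrec; rw [if_pos hzf]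
          have e2 : zrec L q i = q.2 i := by unfold zrec; rw [if_pos (hZFe ▸ hzf)]
          rw [← e1, ← e2]; exact recd_z hR i
        · have hnf : ¬ fresh L p i := by
            by_contra hf
            apply hzf
            rw [mem_ZF]
            exact Or.inr ⟨hf, fun hm => hns ⟨hm, hf⟩⟩
          have hig : i ∈ ZG L p := mem_ZG.2 ⟨hi, hnf⟩
          have higq : i ∈ ZG L q := hZGe ▸ hig
          have hnfq : ¬ fresh L q i := (mem_ZG.1 higq).2
          obtain ⟨w, hw, hw1, hw2⟩ := not_fresh_iff.1 hnf
          have habp : (abv p i).Nonempty := ⟨w, mem_abv.2 ⟨hw, hw1⟩⟩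
          obtain ⟨w', hw', hw1', hw2'⟩ := not_fresh_iff.1 hnfq
          have habq : (abv q i).Nonempty := ⟨w', mem_abv.2 ⟨hw', hw1'⟩⟩
          obtain ⟨j, hj, hjz, hjmin, hjrk⟩ := pred_spec hzp habp
          obtain ⟨j', hj', hjz', hjmin', hjrk'⟩ := pred_spec hzq habq
          have hjs := (mem_abv.1 hj).1
          have hjs' := (mem_abv.1 hj').1
          have hjj : j' = j := by
            apply rk_inj hzq hjs' (hsupp ▸ hjs)
            have t1 := hrk j; have t2 := hrk i
            omega
          have hjzz : p.2 j = q.2 j := by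
            have hjlt : rk p j < k := by omega
            apply (IH j hjs hjlt).1
            rintro ⟨hm, _⟩
            have hmem : i ∈ blw p j := mem_blw.2 ⟨hi, (mem_abv.1 hj).2⟩
            unfold isMin at hm
            rw [hm] at hmem
            simp at hmem
          have e1 : zrec L p i = predz p i - p.2 i := by
            unfold zrec; rw [if_neg hzf, if_pos hig]
          have e2 : zrec L q i = predz q i - q.2 i := by
            unfold zrec; rw [if_neg (show i ∉ ZF L q from hZFe ▸ hzf), if_pos higq]
          have hlt1 : p.2 i < predz p i := by rw [← hjz]; exact (mem_abv.1 hj).2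
          have hlt2 : q.2 i < predz q i := by rw [← hjz']; exact (mem_abv.1 hj').2
          have hpredeq : predz p i = predz q i := by
            rw [← hjz, ← hjz', hjj, hjzz]
          have hrz := recd_z hR i
          rw [e1, e2] at hrz
          omega
      have hY : (¬ (isMin p i ∨ (caseA L p ∧ isMin2 p i))) → p.1 i = q.1 i := by
        intro hns
        push_neg at hns
        obtain ⟨hnmin, hnA2i⟩ := hns
        have hnA2 : ¬ (caseA L p ∧ isMin2 p i) := fun hh => hnA2i hh.1 hh.2
        by_cases hyf : i ∈ YF L p
        · have e1 : yrec L p i = p.1 i := by unfold yrec; rw [if_pos hyf]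
          have e2 : yrec L q i = q.1 i := by unfold yrec; rw [if_pos (hYFe ▸ hyf)]
          rw [← e1, ← e2]; exact recd_y hR i
        · have hbt : bt L p i := by
            by_contra hb
            exact hyf (mem_YF.2 ⟨hi, hb, hnA2⟩)
          have hnA2q : ¬ (caseA L q ∧ isMin2 q i) := by
            rintro ⟨hAq, hm2q⟩
            apply hnA2
            refine ⟨hAiff.2 hAq, ?_⟩
            rw [isMin2_iff hzp hi]
            rw [isMin2_iff hzq hiq] at hm2q
            rw [hrk i, hsc]
            exact hm2q
          have hbtq : bt L q i := by
            by_contra hb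
            have hmem : i ∈ YF L q := mem_YF.2 ⟨hiq, hb, hnA2q⟩
            rw [← hYFe] at hmem
            exact hyf hmem
          have hbne : (blw p i).Nonempty := by
            rw [Finset.nonempty_iff_ne_empty]
            exact fun he => hnmin he
          have hbneq : (blw q i).Nonempty := by
            rw [Finset.nonempty_iff_ne_empty]
            intro he
            apply hnmin
            rw [isMin_iff hzp hi, hrk i, hsc]
            exact (isMin_iff hzq hiq).1 he
          obtain ⟨j, hjb, hjmax, hjrk, hjpred⟩ := succ_spec hzp hi hbne
          obtain ⟨j', hjb', hjmax', hjrk', hjpred'⟩ := succ_spec hzq hiq hbneq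
          have hjs := (mem_blw.1 hjb).1
          have hjs' := (mem_blw.1 hjb').1
          have hjj : j' = j := by
            apply rk_inj hzq hjs' (hsupp ▸ hjs)
            have t1 := hrk j; have t2 := hrk i
            omega
          rw [hjj] at hjb' hjmax' hjrk' hjpred' hjs'
          have hfj : fresh L p j := by
            intro m hm hlt
            rcases Nat.lt_or_ge (p.2 m) (p.2 i) with hmi | hmi
            · have := hjmax m (mem_blw.2 ⟨hm, hmi⟩); omega
            · have hji : p.2 j < p.2 i := (mem_blw.1 hjb).2
              have := hbt j hjs hji
              omega
          have hfjq : fresh L q j := by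
            intro m hm hlt
            rcases Nat.lt_or_ge (q.2 m) (q.2 i) with hmi | hmi
            · have := hjmax' m (mem_blw.2 ⟨hm, hmi⟩); omega
            · have hji : q.2 j < q.2 i := (mem_blw.1 hjb').2
              have := hbtq j hjs' hji
              omega
          have habp : (abv p j).Nonempty := ⟨i, mem_abv.2 ⟨hi, (mem_blw.1 hjb).2⟩⟩
          have habq : (abv q j).Nonempty := ⟨i, mem_abv.2 ⟨hiq, (mem_blw.1 hjb').2⟩⟩
          have hT1 := H1 hc ha0 hg hL2 hzp hyp hjs hfj habp
          have hT2 := H1 hc ha0 hg hL2 hzq hyq hjs' hfjq habq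
          rw [hjpred] at hT1
          rw [hjpred'] at hT2
          have hzi : p.2 i = q.2 i := hZ (fun hh => hnmin hh.1)
          have htlk : tl a p k = tl a q k := by
            rw [tl_eq_neg_head a h5p k, tl_eq_neg_head a h5q k]
            congr 1
            have hset : (supp q).filter (fun x => rk q x < k)
                = (supp p).filter (fun x => rk p x < k) := by
              ext x
              rw [mem_filter, mem_filter, ← hsupp, hrk x]
            rw [hset]
            apply Finset.sum_congr rfl
            intro x hx
            rw [mem_filter] at hx
            obtain ⟨hxs, hxk⟩ := hx
            have hres := IH x hxs hxk
            have hcard := rk_card hzp hi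
            have hxnm : ¬ isMin p x := by
              intro hm
              rw [isMin_iff hzp hxs] at hm
              omega
            have hxy : p.1 x = q.1 x := by
              apply hres.2
              rintro (hm | ⟨hA, hm2⟩)
              · exact hxnm hm
              · rw [isMin2_iff hzp hxs] at hm2
                have hnmin' : rk p i + 1 ≠ (supp p).card :=
                  fun hh => hnmin ((isMin_iff hzp hi).2 hh)
                have hni2 : rk p i + 2 ≠ (supp p).card :=
                  fun hh => hnA2 ⟨hA, (isMin2_iff hzp hi).2 hh⟩
                omega
            have hxz : p.2 x = q.2 x := by
              apply hres.1
              rintro ⟨hm, _⟩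
              exact hxnm hm
            rw [hxy, hxz]
          have hstep_p : tl a p k = p.1 i * (a (p.2 i) : ℤ) + tl a p (k+1) := by
            have := tl_step a hzp hi
            rwa [hik'] at this
          have hstep_q : tl a q k = q.1 i * (a (q.2 i) : ℤ) + tl a q (k+1) := by
            have := tl_step a hzq hiq
            have hqik : rk q i = k := by have := hrk i; omega
            rwa [hqik] at this
          have hrkj : rk p j = k + 1 := by omega
          have hrkj' : rk q j = k + 1 := by have := hrk j; omega
          rw [hrkj] at hT1
          rw [hrkj'] at hT2
          rw [← hzi] at hT2
          have hδeq : (p.1 i - q.1 i) * (a (p.2 i) : ℤ) = tl a q (k+1) - tl a p (k+1) := by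
            have heq2 : p.1 i * (a (p.2 i) : ℤ) + tl a p (k+1)
                = q.1 i * (a (q.2 i) : ℤ) + tl a q (k+1) := by
              rw [← hstep_p, ← hstep_q, htlk]
            rw [← hzi] at heq2
            linear_combination heq2
          have hapos : (0:ℤ) < (a (p.2 i) : ℤ) := by exact_mod_cast ha0 _
          have habs : |p.1 i - q.1 i| ≤ 1 := by
            by_contra hcon
            push_neg at hcon
            have h2' : 2 ≤ |p.1 i - q.1 i| := hcon
            have hb0 : |(p.1 i - q.1 i) * (a (p.2 i):ℤ)| = |p.1 i - q.1 i| * (a (p.2 i):ℤ) := by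
              rw [abs_mul, abs_of_pos hapos]
            have hb1 : |tl a q (k+1) - tl a p (k+1)| ≤ |tl a q (k+1)| + |tl a p (k+1)| :=
              abs_sub _ _
            have hb2 : |(p.1 i - q.1 i) * (a (p.2 i):ℤ)| = |tl a q (k+1) - tl a p (k+1)| := by
              rw [hδeq]
            nlinarith
          have hdvd := recd_par hR i
          have habs' := abs_le.1 habs
          unfold prec at hdvd
          omega
      exact ⟨hZ, hY⟩
  have keyall : ∀ i ∈ supp p,
      ((¬ (isMin p i ∧ fresh L p i)) → p.2 i = q.2 i) ∧
      ((¬ (isMin p i ∨ (caseA L p ∧ isMin2 p i))) → p.1 i = q.1 i) := by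
    intro i hi
    exact key ((supp p).card) i hi (by have := rk_card hzp hi; omega)
  have hsne : (supp p).Nonempty := by
    rcases Function.ne_iff.1 hp1 with ⟨i, hi⟩
    exact ⟨i, mem_supp.2 (by simpa using hi)⟩
  have hscpos : 0 < (supp p).card := card_pos.2 hsne
  obtain ⟨mn, hmn, hmnrk⟩ := exists_rk hzp (show (supp p).card - 1 < (supp p).card by omega)
  have hminmn : isMin p mn := (isMin_iff hzp hmn).2 (by omega)
  have huniqMin : ∀ i ∈ supp p, isMin p i → i = mn := by
    intro i hi hm
    apply rk_inj hzp hi hmn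
    rw [isMin_iff hzp hi] at hm
    omega
  have hsump : ∑ i ∈ supp p, p.1 i * (a (p.2 i):ℤ) = 0 := by rw [sum_supp]; exact h5p
  have hsumq : ∑ i ∈ supp p, q.1 i * (a (q.2 i):ℤ) = 0 := by rw [hsupp, sum_supp]; exact h5q
  have hsump' : ∑ i ∈ supp p, p.1 i = 0 := by rw [sum_supp']; exact h6p
  have hsumq' : ∑ i ∈ supp p, q.1 i = 0 := by rw [hsupp, sum_supp']; exact h6q
  by_cases hA : caseA L p
  · have hs2 : 2 ≤ (supp p).card := by
      obtain ⟨i, hi, hm, hnf⟩ := hA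
      obtain ⟨w, hw, hw1, hw2⟩ := not_fresh_iff.1 hnf
      have hwi : w ≠ i := by intro he; rw [he] at hw1; omega
      exact Finset.one_lt_card.2 ⟨w, hw, i, hi, hwi⟩
    obtain ⟨mn2, hmn2, hmn2rk⟩ := exists_rk hzp (show (supp p).card - 2 < (supp p).card by omega)
    have hne12 : mn ≠ mn2 := by
      intro he; rw [he] at hmnrk; omega
    have huniqMin2 : ∀ i ∈ supp p, isMin2 p i → i = mn2 := by
      intro i hi hm
      apply rk_inj hzp hi hmn2
      rw [isMin2_iff hzp hi] at hm
      omega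
    have hnfmn : ¬ fresh L p mn := by
      obtain ⟨i, hi, hm, hnf⟩ := hA
      rwa [huniqMin i hi hm] at hnf
    have hzall : ∀ i ∈ supp p, p.2 i = q.2 i := by
      intro i hi
      apply (keyall i hi).1
      rintro ⟨hm, hf⟩
      exact hnfmn ((huniqMin i hi hm) ▸ hf)
    have hyall : ∀ i ∈ supp p, i ≠ mn → i ≠ mn2 → p.1 i = q.1 i := by
      intro i hi h1 h2
      apply (keyall i hi).2
      rintro (hm | ⟨_, hm2⟩)
      · exact h1 (huniqMin i hi hm)
      · exact h2 (huniqMin2 i hi hm2)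
    have hpairsub : ({mn, mn2} : Finset (Fin r)) ⊆ supp p := by
      intro x hx
      rcases Finset.mem_insert.1 hx with rfl | hx
      · exact hmn
      · rw [Finset.mem_singleton.1 hx]; exact hmn2
    have E1 : (p.1 mn - q.1 mn) + (p.1 mn2 - q.1 mn2) = 0 := by
      have h0 : ∑ i ∈ supp p, (p.1 i - q.1 i) = 0 := by
        rw [Finset.sum_sub_distrib, hsump', hsumq', sub_zero]
      rw [← Finset.sum_subset hpairsub (fun x hx hnx => by
        have hx1 : x ≠ mn := by intro he; apply hnx; rw [he]; exact mem_insert_self _ _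
        have hx2 : x ≠ mn2 := by intro he; apply hnx; rw [he]; simp
        rw [hyall x hx hx1 hx2, sub_self])] at h0
      rw [Finset.sum_insert (by simp [hne12]), Finset.sum_singleton] at h0
      exact h0
    have E2 : (p.1 mn - q.1 mn) * (a (p.2 mn):ℤ) + (p.1 mn2 - q.1 mn2) * (a (p.2 mn2):ℤ) = 0 := by
      have hq5' : ∑ i ∈ supp p, q.1 i * (a (p.2 i):ℤ) = 0 := by
        refine Eq.trans (Finset.sum_congr rfl fun x hx => ?_) hsumq
        rw [hzall x hx]
      have h0 : ∑ i ∈ supp p, (p.1 i - q.1 i) * (a (p.2 i):ℤ) = 0 := by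
        have hsplit : ∑ i ∈ supp p, (p.1 i - q.1 i) * (a (p.2 i):ℤ)
            = ∑ i ∈ supp p, p.1 i * (a (p.2 i):ℤ) - ∑ i ∈ supp p, q.1 i * (a (p.2 i):ℤ) := by
          rw [← Finset.sum_sub_distrib]
          apply Finset.sum_congr rfl
          intro x _; ring
        rw [hsplit, hsump, hq5', sub_zero]
      rw [← Finset.sum_subset hpairsub (fun x hx hnx => by
        have hx1 : x ≠ mn := by intro he; apply hnx; rw [he]; exact mem_insert_self _ _
        have hx2 : x ≠ mn2 := by intro he; apply hnx; rw [he]; simp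
        rw [hyall x hx hx1 hx2, sub_self, zero_mul])] at h0
      rw [Finset.sum_insert (by simp [hne12]), Finset.sum_singleton] at h0
      exact h0
    have hane : (a (p.2 mn):ℤ) ≠ (a (p.2 mn2):ℤ) := by
      have h1 : p.2 mn ≠ p.2 mn2 := fun he => hne12 (hzp he)
      intro he
      apply h1
      apply (a_strictMono hc ha0 hg).injective
      exact_mod_cast he
    have hd1 : p.1 mn = q.1 mn := by
      have hmul : (p.1 mn - q.1 mn) * ((a (p.2 mn):ℤ) - (a (p.2 mn2):ℤ)) = 0 := by
        linear_combination E2 - (a (p.2 mn2):ℤ) * E1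
      rcases mul_eq_zero.1 hmul with h | h
      · linarith
      · exact absurd (by linarith : (a (p.2 mn):ℤ) = (a (p.2 mn2):ℤ)) hane
    have hd2 : p.1 mn2 = q.1 mn2 := by linarith
    have hyfun : p.1 = q.1 := by
      funext i
      by_cases hi : i ∈ supp p
      · by_cases h1 : i = mn
        · rw [h1]; exact hd1
        · by_cases h2 : i = mn2
          · rw [h2]; exact hd2
          · exact hyall i hi h1 h2
      · have hp0 : p.1 i = 0 := by
          by_contra hh
          exact hi (mem_supp.2 hh)
        have hq0 : q.1 i = 0 := by
          by_contra hh
          exact hi (by rw [hsupp]; exact mem_supp.2 hh)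
        rw [hp0, hq0]
    have hzfun : p.2 = q.2 := by
      funext i
      by_cases hi : i ∈ supp p
      · exact hzall i hi
      · have hzf : i ∈ ZF L p := mem_ZF.2 (Or.inl hi)
        have e1 : zrec L p i = p.2 i := by unfold zrec; rw [if_pos hzf]
        have e2 : zrec L q i = q.2 i := by unfold zrec; rw [if_pos (hZFe ▸ hzf)]
        rw [← e1, ← e2]
        exact recd_z hR i
    exact Prod.ext hyfun hzfun
  · have hfmn : fresh L p mn := by
      by_contra hnf
      exact hA ⟨mn, hmn, hminmn, hnf⟩
    have hzall : ∀ i ∈ supp p, i ≠ mn → p.2 i = q.2 i := by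
      intro i hi hne
      apply (keyall i hi).1
      rintro ⟨hm, _⟩
      exact hne (huniqMin i hi hm)
    have hyall : ∀ i ∈ supp p, i ≠ mn → p.1 i = q.1 i := by
      intro i hi hne
      apply (keyall i hi).2
      rintro (hm | ⟨hA', _⟩)
      · exact hne (huniqMin i hi hm)
      · exact hA hA'
    have hymn : p.1 mn = q.1 mn := by
      have h0 : ∑ i ∈ supp p, (p.1 i - q.1 i) = 0 := by
        rw [Finset.sum_sub_distrib, hsump', hsumq', sub_zero]
      rw [Finset.sum_eq_single_of_mem mn hmn
        (fun x hx hne => by rw [hyall x hx hne, sub_self])] at h0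
      linarith
    have hzmn : p.2 mn = q.2 mn := by
      have hterm : p.1 mn * (a (p.2 mn):ℤ) = q.1 mn * (a (q.2 mn):ℤ) := by
        have h0 : ∑ i ∈ supp p, (p.1 i * (a (p.2 i):ℤ) - q.1 i * (a (q.2 i):ℤ)) = 0 := by
          rw [Finset.sum_sub_distrib, hsump, hsumq, sub_zero]
        rw [Finset.sum_eq_single_of_mem mn hmn
          (fun x hx hne => by rw [hyall x hx hne, hzall x hx hne, sub_self])] at h0
        linarith
      rw [hymn] at hterm
      have hq0 : q.1 mn ≠ 0 := by rw [← hymn]; exact mem_supp.1 hmn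
      have hcc := mul_left_cancel₀ hq0 hterm
      have ha' : a (p.2 mn) = a (q.2 mn) := by exact_mod_cast hcc
      exact (a_strictMono hc ha0 hg).injective ha'
    have hyfun : p.1 = q.1 := by
      funext i
      by_cases hi : i ∈ supp p
      · by_cases h1 : i = mn
        · rw [h1]; exact hymn
        · exact hyall i hi h1
      · have hp0 : p.1 i = 0 := by
          by_contra hh
          exact hi (mem_supp.2 hh)
        have hq0 : q.1 i = 0 := by
          by_contra hh
          exact hi (by rw [hsupp]; exact mem_supp.2 hh)
        rw [hp0, hq0]
    have hzfun : p.2 = q.2 := by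
      funext i
      by_cases hi : i ∈ supp p
      · by_cases h1 : i = mn
        · rw [h1]; exact hzmn
        · exact hzall i hi h1
      · have hzf : i ∈ ZF L p := mem_ZF.2 (Or.inl hi)
        have e1 : zrec L p i = p.2 i := by unfold zrec; rw [if_pos hzf]
        have e2 : zrec L q i = q.2 i := by unfold zrec; rw [if_pos (hZFe ▸ hzf)]
        rw [← e1, ← e2]
        exact recd_z hR i
    exact Prod.ext hyfun hzfun

def predEl (p : Pt r) (i : Fin r) : Fin r :=
  if h : ((abv p i).filter (fun j => p.2 j = predz p i)).Nonempty then
    ((abv p i).filter (fun j => p.2 j = predz p i)).min' h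
  else i

lemma predEl_spec {p : Pt r} (hz : Function.Injective p.2) {i : Fin r}
    (h : (abv p i).Nonempty) :
    predEl p i ∈ abv p i ∧ p.2 (predEl p i) = predz p i := by
  obtain ⟨j, hj, hjz, _, _⟩ := pred_spec hz h
  have hne : ((abv p i).filter (fun j => p.2 j = predz p i)).Nonempty :=
    ⟨j, mem_filter.2 ⟨hj, hjz⟩⟩
  unfold predEl
  rw [dif_pos hne]
  have hmem := Finset.min'_mem _ hne
  rw [mem_filter] at hmem
  exact ⟨hmem.1, hmem.2⟩

lemma predEl_rk {p : Pt r} (hz : Function.Injective p.2) {i : Fin r}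
    (h : (abv p i).Nonempty) : rk p (predEl p i) + 1 = rk p i := by
  obtain ⟨j, hj, hjz, hjmin, hjrk⟩ := pred_spec hz h
  have hspec := predEl_spec hz h
  have hje : j = predEl p i := hz (by rw [hjz, hspec.2])
  rw [← hje]
  exact hjrk

lemma card_le_r (s : Finset (Fin r)) : s.card ≤ r := by
  have := Finset.card_le_univ s
  simpa using this

lemma ZFYF_card {L : ℕ} {p : Pt r} (hz : Function.Injective p.2) (hp1 : p.1 ≠ 0) :
    (ZF L p).card + (YF L p).card + 1 ≤ r := by
  classical
  have hsne : (supp p).Nonempty := by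
    rcases Function.ne_iff.1 hp1 with ⟨i, hi⟩
    exact ⟨i, mem_supp.2 (by simpa using hi)⟩
  have hscpos : 0 < (supp p).card := card_pos.2 hsne
  have hsr : (supp p).card ≤ r := card_le_r _
  have hZFcard : (ZF L p).card
      = (r - (supp p).card) + ((supp p).filter (fun i => fresh L p i ∧ ¬ isMin p i)).card := by
    have hun : ZF L p = (supp p)ᶜ ∪ (supp p).filter (fun i => fresh L p i ∧ ¬ isMin p i) := by
      ext i
      simp only [mem_ZF, Finset.mem_union, Finset.mem_compl, mem_filter]
      by_cases hi : i ∈ supp p <;> tauto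
    rw [hun, Finset.card_union_of_disjoint]
    · rw [Finset.card_compl]
      simp
    · exact Finset.disjoint_left.2 (fun x hx hx2 => (Finset.mem_compl.1 hx) (mem_filter.1 hx2).1)
  have hYFcard : (YF L p).card
      + ((supp p).filter (fun i => bt L p i ∨ (caseA L p ∧ isMin2 p i))).card
      = (supp p).card := by
    have heq : YF L p = (supp p).filter
        (fun i => ¬ (bt L p i ∨ (caseA L p ∧ isMin2 p i))) := by
      ext i
      simp only [mem_YF, mem_filter]
      tauto
    rw [heq]
    rw [add_comm]
    exact card_filter_add_card_filter_not (fun i => bt L p i ∨ (caseA L p ∧ isMin2 p i))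
  set F' := (supp p).filter (fun i => fresh L p i ∧ ¬ isMin p i) with hF'
  set B' := (supp p).filter (fun i => bt L p i ∨ (caseA L p ∧ isMin2 p i)) with hB'
  suffices h : F'.card + 1 ≤ B'.card by omega
  obtain ⟨mn, hmn, hmnrk⟩ := exists_rk hz (show (supp p).card - 1 < (supp p).card by omega)
  have hminmn : isMin p mn := (isMin_iff hz hmn).2 (by omega)
  set f : Fin r → Fin r := fun i => if (abv p i).Nonempty then predEl p i else mn with hf
  have hfmem : ∀ i ∈ supp p, fresh L p i → (abv p i).Nonempty →
      f i ∈ B' ∧ rk p (f i) + 1 = rk p i := by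
    intro i hi hfr hab
    have hspec := predEl_spec hz hab
    have hrkp := predEl_rk hz hab
    have hPmem : predEl p i ∈ supp p := (mem_abv.1 hspec.1).1
    have hfi : f i = predEl p i := by rw [hf]; simp [hab]
    have hbtP : bt L p (predEl p i) := by
      intro m hm hlt
      have hzi : p.2 i < p.2 (predEl p i) := (mem_abv.1 hspec.1).2
      have hfar : p.2 i + L < p.2 (predEl p i) := hfr _ hPmem hzi
      rcases Nat.lt_or_ge (p.2 i) (p.2 m) with hmi | hmi
      · obtain ⟨j0, hj0, hj0z, hj0min, _⟩ := pred_spec hz hab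
        have : p.2 (predEl p i) ≤ p.2 m := by
          rw [hspec.2, ← hj0z]
          exact hj0min m (mem_abv.2 ⟨hm, hmi⟩)
        omega
      · omega
    rw [hfi]
    exact ⟨mem_filter.2 ⟨hPmem, Or.inl hbtP⟩, hrkp⟩
  have hmnB : mn ∈ B' := by
    apply mem_filter.2
    refine ⟨hmn, Or.inl ?_⟩
    intro m hm hlt
    exfalso
    have hmem : m ∈ blw p mn := mem_blw.2 ⟨hm, hlt⟩
    unfold isMin at hminmn
    rw [hminmn] at hmem
    simp at hmem
  have hinj : ∀ i ∈ supp p, ∀ i' ∈ supp p, fresh L p i → fresh L p i' → f i = f i' → i = i' := by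
    intro i hi i' hi' hfr hfr' heq
    by_cases h1 : (abv p i).Nonempty <;> by_cases h2 : (abv p i').Nonempty
    · have r1 := (hfmem i hi hfr h1).2
      have r2 := (hfmem i' hi' hfr' h2).2
      rw [heq] at r1
      exact rk_inj hz hi hi' (by omega)
    · exfalso
      have r1 := (hfmem i hi hfr h1).2
      have heq2 : f i' = mn := by rw [hf]; simp [h2]
      rw [heq, heq2] at r1
      have := rk_card hz hi
      omega
    · exfalso
      have r2 := (hfmem i' hi' hfr' h2).2
      have heq2 : f i = mn := by rw [hf]; simp [h1]
      rw [← heq, heq2] at r2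
      have := rk_card hz hi'
      omega
    · apply rk_inj hz hi hi'
      unfold rk
      rw [Finset.not_nonempty_iff_eq_empty.1 h1, Finset.not_nonempty_iff_eq_empty.1 h2]
  by_cases hA : caseA L p
  · have hs2 : 2 ≤ (supp p).card := by
      obtain ⟨i, hi, hm, hnf⟩ := hA
      obtain ⟨w, hw, hw1, hw2⟩ := not_fresh_iff.1 hnf
      have hwi : w ≠ i := by intro he; rw [he] at hw1; omega
      exact Finset.one_lt_card.2 ⟨w, hw, i, hi, hwi⟩
    obtain ⟨mn2, hmn2, hmn2rk⟩ := exists_rk hz (show (supp p).card - 2 < (supp p).card by omega)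
    have hmn2B : mn2 ∈ B' :=
      mem_filter.2 ⟨hmn2, Or.inr ⟨hA, (isMin2_iff hz hmn2).2 (by omega)⟩⟩
    have hcard1 : F'.card ≤ (B'.erase mn2).card := by
      apply Finset.card_le_card_of_injOn f
      · intro i hiF
        have hiF' := mem_filter.1 hiF
        have hi := hiF'.1
        have hfr := hiF'.2.1
        have hnm := hiF'.2.2
        rw [Finset.mem_coe, Finset.mem_erase]
        constructor
        · by_cases h1 : (abv p i).Nonempty
          · have r1 := (hfmem i hi hfr h1).2
            intro heq
            rw [heq] at r1
            have := rk_card hz hi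
            apply hnm
            apply (isMin_iff hz hi).2
            omega
          · have heq2 : f i = mn := by rw [hf]; simp [h1]
            rw [heq2]
            intro heq
            rw [heq] at hmnrk
            omega
        · by_cases h1 : (abv p i).Nonempty
          · exact (hfmem i hi hfr h1).1
          · have heq2 : f i = mn := by rw [hf]; simp [h1]
            rw [heq2]
            exact hmnB
      · intro i hiF i' hiF' heq
        have h1 := mem_filter.1 hiF
        have h2 := mem_filter.1 hiF'
        exact hinj i h1.1 i' h2.1 h1.2.1 h2.2.1 heq
    have hercard := Finset.card_erase_of_mem hmn2B
    have hBpos : 0 < B'.card := card_pos.2 ⟨mn2, hmn2B⟩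
    omega
  · have hmnF : mn ∉ F' := by
      intro h
      exact (mem_filter.1 h).2.2 hminmn
    have hfrmn : fresh L p mn := by
      by_contra hnf
      exact hA ⟨mn, hmn, hminmn, hnf⟩
    have hcard1 : (insert mn F').card ≤ B'.card := by
      apply Finset.card_le_card_of_injOn f
      · intro i hiI
        rcases Finset.mem_insert.1 hiI with rfl | hiF
        · by_cases h1 : (abv p i).Nonempty
          · exact (hfmem i hmn hfrmn h1).1
          · have heq2 : f i = i := by rw [hf]; simp [h1]
            rw [heq2]
            exact hmnB
        · have hiF' := mem_filter.1 hiF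
          by_cases h1 : (abv p i).Nonempty
          · exact (hfmem i hiF'.1 hiF'.2.1 h1).1
          · have heq2 : f i = mn := by rw [hf]; simp [h1]
            rw [heq2]
            exact hmnB
      · intro i hiI i' hiI' heq
        have hmem1 : i ∈ supp p ∧ fresh L p i := by
          rcases Finset.mem_insert.1 hiI with rfl | hiF
          · exact ⟨hmn, hfrmn⟩
          · have := mem_filter.1 hiF
            exact ⟨this.1, this.2.1⟩
        have hmem2 : i' ∈ supp p ∧ fresh L p i' := by
          rcases Finset.mem_insert.1 hiI' with rfl | hiF
          · exact ⟨hmn, hfrmn⟩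
          · have := mem_filter.1 hiF
            exact ⟨this.1, this.2.1⟩
        exact hinj i hmem1.1 i' hmem2.1 hmem1.2 hmem2.2 heq
    rw [Finset.card_insert_of_notMem hmnF] at hcard1
    omega

lemma ZG_card {L : ℕ} {p : Pt r} (hz : Function.Injective p.2) (hp1 : p.1 ≠ 0) :
    (ZG L p).card + 1 ≤ r := by
  have hsne : (supp p).Nonempty := by
    rcases Function.ne_iff.1 hp1 with ⟨i, hi⟩
    exact ⟨i, mem_supp.2 (by simpa using hi)⟩
  have hscpos : 0 < (supp p).card := card_pos.2 hsne
  obtain ⟨tp, htp, htprk⟩ := exists_rk hz (show 0 < (supp p).card from hscpos)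
  have hfr : fresh L p tp := by
    intro j hj hlt
    exfalso
    have : j ∈ abv p tp := mem_abv.2 ⟨hj, hlt⟩
    have he : abv p tp = ∅ := Finset.card_eq_zero.1 htprk
    rw [he] at this
    simp at this
  have hsub : ZG L p ⊆ (supp p).erase tp := by
    intro i hi
    rw [mem_ZG] at hi
    rw [Finset.mem_erase]
    refine ⟨?_, hi.1⟩
    intro he
    rw [he] at hi
    exact hi.2 hfr
  have h1 : (ZG L p).card ≤ ((supp p).erase tp).card := card_le_card hsub
  have h2 := Finset.card_erase_of_mem htp
  have h3 : (supp p).card ≤ r := card_le_r _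
  omega

def zS (N L : ℕ) (φ : Flag r) (i : Fin r) : Finset ℕ :=
  if i ∈ φ.2.2.1 then Finset.Icc 0 N else if i ∈ φ.2.2.2.1 then Finset.Icc 1 L else {0}

noncomputable def yS (N : ℕ) (φ : Flag r) (i : Fin r) : Finset ℤ :=
  if i ∈ φ.2.2.2.2 then Finset.Icc (-(N:ℤ)) N else {0}

noncomputable def G (N L : ℕ) (φ : Flag r) : Finset (Rec r) :=
  (Fintype.piFinset (zS N L φ)) ×ˢ (Fintype.piFinset (yS N φ)) ×ˢ
    (Fintype.piFinset fun _ => ({0, 1} : Finset ℤ))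

lemma flags_comp1 (L : ℕ) (p : Pt r) : (flags L p).2.2.1 = ZF L p := rfl
lemma flags_comp2 (L : ℕ) (p : Pt r) : (flags L p).2.2.2.1 = ZG L p := rfl
lemma flags_comp3 (L : ℕ) (p : Pt r) : (flags L p).2.2.2.2 = YF L p := rfl

lemma recd_mem_G {a : ℕ → ℕ} {N L : ℕ} {p : Pt r} (hsol : Sol a N p) :
    recd L p ∈ G N L (flags L p) := by
  obtain ⟨hp1, hz, hy, hzr, _, _⟩ := hsol
  rw [G, Finset.mem_product, Finset.mem_product]
  refine ⟨?_, ?_, ?_⟩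
  · rw [Fintype.mem_piFinset]
    intro i
    rw [zS, flags_comp1, flags_comp2]
    by_cases h1 : i ∈ ZF L p
    · rw [if_pos h1]
      have e1 : zrec L p i = p.2 i := by unfold zrec; rw [if_pos h1]
      rw [show (recd L p).1 = zrec L p from rfl, e1, Finset.mem_Icc]
      exact ⟨Nat.zero_le _, (hzr i).2⟩
    · rw [if_neg h1]
      by_cases h2 : i ∈ ZG L p
      · rw [if_pos h2]
        have e1 : zrec L p i = predz p i - p.2 i := by unfold zrec; rw [if_neg h1, if_pos h2]
        rw [show (recd L p).1 = zrec L p from rfl, e1, Finset.mem_Icc]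
        have hnf := (mem_ZG.1 h2).2
        obtain ⟨w, hw, hw1, hw2⟩ := not_fresh_iff.1 hnf
        have hab : (abv p i).Nonempty := ⟨w, mem_abv.2 ⟨hw, hw1⟩⟩
        obtain ⟨j, hj, hjz, hjmin, _⟩ := pred_spec hz hab
        have hgt : p.2 i < predz p i := by rw [← hjz]; exact (mem_abv.1 hj).2
        have hle : predz p i ≤ p.2 i + L := by
          rw [← hjz]
          exact le_trans (hjmin w (mem_abv.2 ⟨hw, hw1⟩)) hw2
        omega
      · rw [if_neg h2]
        have e1 : zrec L p i = 0 := by unfold zrec; rw [if_neg h1, if_neg h2]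
        rw [show (recd L p).1 = zrec L p from rfl, e1]
        simp
  · rw [Fintype.mem_piFinset]
    intro i
    rw [yS, flags_comp3]
    by_cases h1 : i ∈ YF L p
    · rw [if_pos h1]
      have e1 : yrec L p i = p.1 i := by unfold yrec; rw [if_pos h1]
      rw [show (recd L p).2.1 = yrec L p from rfl, e1, Finset.mem_Icc]
      have := abs_le.1 (hy i)
      exact this
    · rw [if_neg h1]
      have e1 : yrec L p i = 0 := by unfold yrec; rw [if_neg h1]
      rw [show (recd L p).2.1 = yrec L p from rfl, e1]
      simp
  · rw [Fintype.mem_piFinset]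
    intro i
    have : (recd L p).2.2 i = p.1 i % 2 := rfl
    rw [this]
    rcases Int.emod_two_eq (p.1 i) with h | h <;> simp [h]

lemma G_card_le {a : ℕ → ℕ} {N L : ℕ} {p : Pt r} (hL1 : 1 ≤ L) (hsol : Sol a N p) :
    (G N L (flags L p)).card ≤ (2*N+1)^(r-1) * L^(r-1) * 2^r := by
  classical
  obtain ⟨hp1, hz, _, _, _, _⟩ := hsol
  have hcard : (G N L (flags L p)).card
      = (∏ i, (zS N L (flags L p) i).card) * ((∏ i, (yS N (flags L p) i).card)
        * (∏ _i : Fin r, (({0,1} : Finset ℤ)).card)) := by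
    rw [G, Finset.card_product, Finset.card_product, Fintype.card_piFinset,
      Fintype.card_piFinset, Fintype.card_piFinset]
  have hzcard : ∀ i, (zS N L (flags L p) i).card
      = if i ∈ ZF L p then N+1 else if i ∈ ZG L p then L else 1 := by
    intro i
    rw [zS, flags_comp1, flags_comp2]
    split_ifs <;> simp [Nat.card_Icc]
  have hycard : ∀ i, (yS N (flags L p) i).card
      = if i ∈ YF L p then 2*N+1 else 1 := by
    intro i
    rw [yS, flags_comp3]
    split_ifs <;> simp [Int.card_Icc]
    omega
  have hZGdisj : ∀ i ∈ ZG L p, i ∉ ZF L p := by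
    intro i hi
    rw [mem_ZG] at hi
    rw [mem_ZF]
    push_neg
    exact ⟨hi.1, fun hf => absurd hf hi.2⟩
  have hzprod : ∏ i, (zS N L (flags L p) i).card = (N+1)^((ZF L p).card) * L^((ZG L p).card) := by
    have h1 : ∏ i, (zS N L (flags L p) i).card
        = (∏ i ∈ ZF L p, (N+1)) * ∏ i ∈ (ZF L p)ᶜ, (if i ∈ ZG L p then L else 1) := by
      rw [← Finset.prod_mul_prod_compl (ZF L p)]
      congr 1
      · apply Finset.prod_congr rfl
        intro i hi
        rw [hzcard i, if_pos hi]
      · apply Finset.prod_congr rfl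
        intro i hi
        rw [hzcard i, if_neg (Finset.mem_compl.1 hi)]
    rw [h1, Finset.prod_const]
    congr 1
    have h2 : ∏ i ∈ (ZF L p)ᶜ, (if i ∈ ZG L p then L else 1)
        = (∏ i ∈ (ZF L p)ᶜ.filter (fun i => i ∈ ZG L p), L)
          * ∏ i ∈ (ZF L p)ᶜ.filter (fun i => i ∉ ZG L p), 1 := by
      rw [← Finset.prod_filter_mul_prod_filter_not ((ZF L p)ᶜ) (fun i => i ∈ ZG L p)]
      congr 1
      · apply Finset.prod_congr rfl; intro i hi; rw [if_pos (mem_filter.1 hi).2]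
      · apply Finset.prod_congr rfl; intro i hi; rw [if_neg (mem_filter.1 hi).2]
    have h3 : (ZF L p)ᶜ.filter (fun i => i ∈ ZG L p) = ZG L p := by
      ext i
      rw [mem_filter, Finset.mem_compl]
      constructor
      · rintro ⟨_, h⟩; exact h
      · intro h; exact ⟨hZGdisj i h, h⟩
    rw [h2, h3, Finset.prod_const, Finset.prod_const_one, mul_one]
  have hyprod : ∏ i, (yS N (flags L p) i).card = (2*N+1)^((YF L p).card) := by
    have h1 : ∏ i, (yS N (flags L p) i).card
        = (∏ i ∈ YF L p, (2*N+1)) * ∏ i ∈ (YF L p)ᶜ, 1 := by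
      rw [← Finset.prod_mul_prod_compl (YF L p)]
      congr 1
      · apply Finset.prod_congr rfl; intro i hi; rw [hycard i, if_pos hi]
      · apply Finset.prod_congr rfl; intro i hi
        rw [hycard i, if_neg (Finset.mem_compl.1 hi)]
    rw [h1, Finset.prod_const, Finset.prod_const_one, mul_one]
  have h2prod : (∏ _i : Fin r, (({0,1} : Finset ℤ)).card) = 2^r := by
    have hc2 : (({0,1} : Finset ℤ)).card = 2 := by decide
    simp [hc2]
  have hZY := ZFYF_card (L := L) hz hp1
  have hZG := ZG_card (L := L) hz hp1
  rw [hcard, hzprod, hyprod, h2prod]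
  have hb1 : (N+1)^((ZF L p).card) * L^((ZG L p).card) * ((2*N+1)^((YF L p).card) * 2^r)
      ≤ (2*N+1)^((ZF L p).card) * L^(r-1) * ((2*N+1)^((YF L p).card) * 2^r) := by
    apply Nat.mul_le_mul_right
    apply Nat.mul_le_mul
    · exact Nat.pow_le_pow_left (by omega) _
    · exact Nat.pow_le_pow_right hL1 (by omega)
  refine le_trans hb1 ?_
  have hb2 : (2*N+1)^((ZF L p).card) * (2*N+1)^((YF L p).card) ≤ (2*N+1)^(r-1) := by
    rw [← pow_add]
    exact Nat.pow_le_pow_right (by omega) (by omega)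
  calc (2*N+1)^((ZF L p).card) * L^(r-1) * ((2*N+1)^((YF L p).card) * 2^r)
      = ((2*N+1)^((ZF L p).card) * (2*N+1)^((YF L p).card)) * L^(r-1) * 2^r := by ring
    _ ≤ (2*N+1)^(r-1) * L^(r-1) * 2^r := by
        apply Nat.mul_le_mul_right
        exact Nat.mul_le_mul_right _ hb2

lemma count_le {c : ℝ} (hc : 1 < c) {a : ℕ → ℕ} (ha0 : ∀ n, 0 < a n)
    (hg : ∀ n, c * (a n : ℝ) < (a (n+1) : ℝ)) {N L : ℕ} (hL1 : 1 ≤ L)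
    (hL2 : ((2 * r * N : ℕ) : ℝ) ≤ c ^ L) :
    ({p : Pt r | Sol a N p}).ncard
      ≤ Fintype.card (Flag r) * ((2*N+1)^(r-1) * L^(r-1) * 2^r) := by
  classical
  have hsub : {p : Pt r | Sol a N p} ⊆
      ↑((Fintype.piFinset fun _ : Fin r => Finset.Icc (-(N:ℤ)) (N:ℤ)) ×ˢ
        (Fintype.piFinset fun _ : Fin r => Finset.Icc 1 N)) := by
    rintro p hp
    obtain ⟨_, _, hy, hzr, _, _⟩ := hp
    rw [Finset.mem_coe, Finset.mem_product]
    constructor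
    · rw [Fintype.mem_piFinset]
      intro i
      rw [Finset.mem_Icc]
      exact abs_le.1 (hy i)
    · rw [Fintype.mem_piFinset]
      intro i
      rw [Finset.mem_Icc]
      exact hzr i
  have hfin : ({p : Pt r | Sol a N p}).Finite :=
    Set.Finite.subset (Finset.finite_toSet _) hsub
  have hmem : ∀ {p : Pt r}, p ∈ hfin.toFinset ↔ Sol a N p := by
    intro p
    rw [Set.Finite.mem_toFinset]
    rfl
  set T := ((hfin.toFinset).image (flags L)).biUnion
    (fun φ => (G N L φ).image (fun g => (φ, g))) with hT
  have h1 : (hfin.toFinset).card ≤ T.card := by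
    apply Finset.card_le_card_of_injOn (fun p => (flags L p, recd L p))
    · intro p hp
      apply Finset.mem_biUnion.2
      exact ⟨flags L p, Finset.mem_image_of_mem _ hp,
        Finset.mem_image.2 ⟨recd L p, recd_mem_G (hmem.1 hp), rfl⟩⟩
    · intro p hp q hq heq
      exact inj_main hc ha0 hg hL2 (hmem.1 hp) (hmem.1 hq)
        (congrArg Prod.fst heq) (congrArg Prod.snd heq)
  have h2 : T.card ≤ ∑ φ ∈ (hfin.toFinset).image (flags L),
      ((G N L φ).image (fun g => (φ, g))).card := Finset.card_biUnion_le
  have h3 : ∀ φ ∈ (hfin.toFinset).image (flags L),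
      ((G N L φ).image (fun g => (φ, g))).card ≤ (2*N+1)^(r-1) * L^(r-1) * 2^r := by
    intro φ hφ
    obtain ⟨p, hp, rfl⟩ := Finset.mem_image.1 hφ
    exact le_trans Finset.card_image_le (G_card_le hL1 (hmem.1 hp))
  have h4 : ∑ φ ∈ (hfin.toFinset).image (flags L),
      ((G N L φ).image (fun g => (φ, g))).card
      ≤ ((hfin.toFinset).image (flags L)).card * ((2*N+1)^(r-1) * L^(r-1) * 2^r) := by
    have := Finset.sum_le_card_nsmul ((hfin.toFinset).image (flags L))
      (fun φ => ((G N L φ).image (fun g => (φ, g))).card)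
      ((2*N+1)^(r-1) * L^(r-1) * 2^r) h3
    simpa using this
  have h5 : ((hfin.toFinset).image (flags L)).card ≤ Fintype.card (Flag r) := by
    have := Finset.card_le_univ ((hfin.toFinset).image (flags L))
    simpa using this
  have h6 : ({p : Pt r | Sol a N p}).ncard = (hfin.toFinset).card :=
    Set.ncard_eq_toFinset_card _ hfin
  rw [h6]
  calc (hfin.toFinset).card ≤ T.card := h1
    _ ≤ _ := le_trans h2 h4
    _ ≤ Fintype.card (Flag r) * ((2*N+1)^(r-1) * L^(r-1) * 2^r) :=
        Nat.mul_le_mul_right _ h5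

end St2

set_option maxHeartbeats 2000000

/-- Counting lemma: for a lacunary sequence `a` with ratio `c > 1`, the number of
nontrivial solutions of `∑ y i * a (z i) = 0`, `∑ y i = 0` with distinct positive
`z i ≤ N` and `|y i| ≤ N` is `O_{r,c}(N^(r-1) (log N)^(r-1))`. -/
theorem stmt2 (c : ℝ) (hc : 1 < c) (r : ℕ) (hr : 1 ≤ r) :
    ∃ κ : ℝ, ∀ (a : ℕ → ℕ), (∀ n, 0 < a n) → (∀ n, c * a n < a (n + 1)) →
      ∀ (N : ℕ), 2 ≤ N →
        (Set.ncard {p : (Fin r → ℤ) × (Fin r → ℕ) |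
            p.1 ≠ 0 ∧ Function.Injective p.2 ∧
            (∀ i, |p.1 i| ≤ (N : ℤ)) ∧ (∀ i, 1 ≤ p.2 i ∧ p.2 i ≤ N) ∧
            (∑ i, p.1 i * (a (p.2 i) : ℤ)) = 0 ∧ (∑ i, p.1 i) = 0} : ℝ)
          ≤ κ * (N : ℝ) ^ (r - 1) * (Real.log N) ^ (r - 1) := by
  classical
  have hlogc : 0 < Real.log c := Real.log_pos hc
  have hlog2 : 0 < Real.log 2 := Real.log_pos one_lt_two
  set K : ℝ := (Real.log (2*(r:ℝ)) / Real.log 2 + 1) / Real.log c + 2 / Real.log 2 with hKdef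
  refine ⟨(Fintype.card (St2.Flag r) : ℝ) * 2^r * 3^(r-1) * K^(r-1), ?_⟩
  intro a ha0 hg N hN
  set L : ℕ := ⌈Real.log (2*(r:ℝ)*N) / Real.log c⌉₊ + 1 with hLdef
  have hrpos : (1:ℝ) ≤ (r:ℝ) := by exact_mod_cast hr
  have hNpos : (2:ℝ) ≤ (N:ℝ) := by exact_mod_cast hN
  have h2rN : (0:ℝ) < 2*(r:ℝ)*(N:ℝ) := by nlinarith
  have hLcast : (L:ℝ) = (⌈Real.log (2*(r:ℝ)*N) / Real.log c⌉₊ : ℝ) + 1 := by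
    rw [hLdef]; push_cast; ring
  have hL2 : ((2 * r * N : ℕ) : ℝ) ≤ c ^ L := by
    have hcast : ((2*r*N : ℕ):ℝ) = 2*(r:ℝ)*(N:ℝ) := by push_cast; ring
    rw [hcast]
    have h1 : Real.log (2*(r:ℝ)*N) / Real.log c ≤ (L:ℝ) := by
      have := Nat.le_ceil (Real.log (2*(r:ℝ)*N) / Real.log c)
      rw [hLcast]; linarith
    have hle : Real.log (2*(r:ℝ)*N) ≤ (L:ℝ) * Real.log c := by
      calc Real.log (2*(r:ℝ)*N)
          = (Real.log (2*(r:ℝ)*N) / Real.log c) * Real.log c := by field_simp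
        _ ≤ (L:ℝ) * Real.log c := by nlinarith
    have hcL : 0 < c ^ L := pow_pos (lt_trans one_pos hc) L
    rw [← Real.exp_log h2rN, ← Real.exp_log hcL]
    apply Real.exp_le_exp.2
    rwa [Real.log_pow]
  have hL1 : 1 ≤ L := by rw [hLdef]; omega
  clear_value L
  have hmain := St2.count_le (r := r) hc ha0 hg hL1 hL2
  have hlogN : Real.log 2 ≤ Real.log N :=
    Real.log_le_log (by norm_num) hNpos
  have hlogNpos : 0 < Real.log N := lt_of_lt_of_le hlog2 hlogN
  set A := Real.log (2*(r:ℝ)) with hA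
  set B := Real.log (N:ℝ) with hB
  have hA0 : Real.log 2 ≤ A := by
    rw [hA]
    apply Real.log_le_log (by norm_num)
    nlinarith
  have hAnn : 0 ≤ A := le_trans (le_of_lt hlog2) hA0
  have hKN : (L:ℝ) ≤ K * B := by
    have hxnn : 0 ≤ Real.log (2*(r:ℝ)*N) / Real.log c := by
      apply div_nonneg _ (le_of_lt hlogc)
      apply Real.log_nonneg
      nlinarith
    have hceil : (⌈Real.log (2*(r:ℝ)*N) / Real.log c⌉₊ : ℝ)
        < Real.log (2*(r:ℝ)*N) / Real.log c + 1 := Nat.ceil_lt_add_one hxnn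
    have hLle : (L:ℝ) ≤ Real.log (2*(r:ℝ)*N) / Real.log c + 2 := by
      rw [hLcast]; linarith
    have hsplit : Real.log (2*(r:ℝ)*N) = A + B := by
      rw [hA, hB, ← Real.log_mul (by nlinarith) (by nlinarith)]
    rw [hsplit] at hLle
    have hKB : K * B = ((A/Real.log 2 + 1) * B)/Real.log c + 2*B/Real.log 2 := by
      rw [hKdef]
      field_simp
    have hD : 1 ≤ B / Real.log 2 := (one_le_div hlog2).2 hlogN
    have hclaim1 : (A + B)/Real.log c ≤ ((A/Real.log 2 + 1) * B)/Real.log c := by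
      have h1 : A * 1 ≤ A * (B / Real.log 2) := mul_le_mul_of_nonneg_left hD hAnn
      have h2 : (A/Real.log 2 + 1) * B = A * (B/Real.log 2) + B := by
        field_simp
      have h3 : A + B ≤ (A/Real.log 2 + 1) * B := by rw [h2]; linarith
      exact (div_le_div_iff_of_pos_right hlogc).2 h3
    have hclaim2 : (2:ℝ) ≤ 2*B/Real.log 2 := by
      rw [le_div_iff₀ hlog2]; linarith
    rw [hKB]
    linarith
  -- combine
  have hKpos : 0 ≤ K := by
    rw [hKdef]
    have : 0 ≤ (Real.log (2*(r:ℝ)) / Real.log 2 + 1) / Real.log c := by positivity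
    positivity
  clear_value K A B
  have hsetid : {p : (Fin r → ℤ) × (Fin r → ℕ) |
      p.1 ≠ 0 ∧ Function.Injective p.2 ∧
      (∀ i, |p.1 i| ≤ (N : ℤ)) ∧ (∀ i, 1 ≤ p.2 i ∧ p.2 i ≤ N) ∧
      (∑ i, p.1 i * (a (p.2 i) : ℤ)) = 0 ∧ (∑ i, p.1 i) = 0}
      = {p : St2.Pt r | St2.Sol a N p} := rfl
  rw [hsetid]
  have hcast2 : ((({p : St2.Pt r | St2.Sol a N p}).ncard : ℕ) : ℝ)
      ≤ ((Fintype.card (St2.Flag r) * ((2*N+1)^(r-1) * L^(r-1) * 2^r) : ℕ) : ℝ) := by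
    exact_mod_cast hmain
  refine le_trans hcast2 ?_
  push_cast
  have e1 : (2*(N:ℝ)+1) ≤ 3 * N := by linarith
  have p1 : (2*(N:ℝ)+1)^(r-1) ≤ (3*(N:ℝ))^(r-1) :=
    pow_le_pow_left₀ (by positivity) e1 _
  have p2 : ((L:ℕ):ℝ)^(r-1) ≤ (K * B)^(r-1) :=
    pow_le_pow_left₀ (Nat.cast_nonneg _) hKN _
  have hcardnn : (0:ℝ) ≤ (Fintype.card (St2.Flag r) : ℝ) := Nat.cast_nonneg _
  calc (Fintype.card (St2.Flag r) : ℝ) * ((2*(N:ℝ)+1)^(r-1) * ((L:ℕ):ℝ)^(r-1) * 2^r)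
      ≤ (Fintype.card (St2.Flag r) : ℝ) * ((3*(N:ℝ))^(r-1) * ((K*B))^(r-1) * 2^r) := by
        apply mul_le_mul_of_nonneg_left _ hcardnn
        apply mul_le_mul_of_nonneg_right _ (by positivity)
        apply mul_le_mul p1 p2 (by positivity) (by positivity)
    _ = (Fintype.card (St2.Flag r) : ℝ) * 2^r * 3^(r-1) * K^(r-1) * (N:ℝ)^(r-1) * B^(r-1) := by
        rw [mul_pow, mul_pow]
        ring
end

section
/- Let $N > 1$ and let $a_1, \dots, a_k$ be positive integers with $a_{j+1} \ge N a_j$ for $1 \le j \le k-1$. Then the set $\Lambda = \{\alpha \in [0,1] : \|\alpha a_j\| \le 1/N \text{ for all } 1 \le j \le k\}$ has Lebesgue measure at most $4^k / N^k$. -/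
/-!
Cover `{α | ‖α a₀‖ ≤ 1/N}` by the windows `[(p - 1/N)/a₀, (p + 1/N)/a₀]` of length `2/(N a₀)`.
Since `a₁ ≥ N a₀`, such a window has length at least `2/a₁`, so it meets at most
`2 a₁ · 2/(N a₀)` windows of the next level, each of length `2/(N a₁)`: passing to the next
level costs a factor `4/N`. On `[0,1]` the first level has only `a₀ + 1 ≤ 2 a₀` windows.
-/

open MeasureTheory Set

def nearIntegerSet (δ : ℝ) {k : ℕ} (a : Fin k → ℕ) : Set ℝ :=
  {α : ℝ | ∀ j, |α * a j - round (α * a j)| ≤ δ}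

lemma nearIntegerSet_succ (δ : ℝ) {k : ℕ} (a : Fin (k + 1) → ℕ) :
    nearIntegerSet δ a =
      {α : ℝ | |α * a 0 - round (α * a 0)| ≤ δ} ∩ nearIntegerSet δ (Fin.tail a) := by
  ext α
  exact Fin.forall_fin_succ

lemma volume_Icc_inter_le_card_mul {q δ c d : ℝ} (hq : 0 < q) (T : Set ℝ) (s : Finset ℤ)
    (hs : ∀ p : ℤ, ∀ α ∈ Icc c d, |α * q - p| ≤ δ → p ∈ s) {M : ENNReal}
    (hT : ∀ p : ℤ, volume (Icc ((p - δ) / q) ((p + δ) / q) ∩ T) ≤ M) :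
    volume (Icc c d ∩ ({α | |α * q - round (α * q)| ≤ δ} ∩ T)) ≤ s.card * M := by
  calc volume (Icc c d ∩ ({α | |α * q - round (α * q)| ≤ δ} ∩ T))
      ≤ volume (⋃ p ∈ s, Icc ((p - δ) / q) ((p + δ) / q) ∩ T) := measure_mono ?_
    _ ≤ ∑ p ∈ s, volume (Icc ((p - δ) / q) ((p + δ) / q) ∩ T) := measure_biUnion_finset_le _ _
    _ ≤ ∑ _p ∈ s, M := Finset.sum_le_sum fun p _ => hT p
    _ = s.card * M := by rw [Finset.sum_const, nsmul_eq_mul]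
  rintro α ⟨hα, hnear : |α * q - round (α * q)| ≤ δ, hαT⟩
  refine mem_biUnion (hs _ α hα hnear) ⟨?_, hαT⟩
  rw [abs_le] at hnear
  constructor
  · rw [div_le_iff₀ hq]; linarith
  · rw [le_div_iff₀ hq]; linarith

lemma mem_Icc_ceil_floor_of_abs_sub_le {q δ c d α : ℝ} {p : ℤ} (hq : 0 ≤ q) (hα : α ∈ Icc c d)
    (h : |α * q - p| ≤ δ) : p ∈ Finset.Icc ⌈q * c - δ⌉ ⌊q * d + δ⌋ := by
  rw [← Int.cast_mem_Icc_iff]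
  rw [abs_le] at h
  constructor <;> nlinarith [hα.1, hα.2]

lemma mem_Icc_zero_of_abs_sub_le {q : ℕ} {δ α : ℝ} {p : ℤ} (hδ : δ < 1) (hα : α ∈ Icc 0 1)
    (h : |α * q - p| ≤ δ) : p ∈ Finset.Icc 0 (q : ℤ) := by
  rw [abs_le] at h
  have hlo : ((-1 : ℤ) : ℝ) < p := by push_cast; nlinarith [hα.1]
  have hhi : (p : ℝ) < ((q + 1 : ℤ) : ℝ) := by push_cast; nlinarith [hα.2]
  have := Int.cast_lt.1 hlo
  have := Int.cast_lt.1 hhi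
  rw [Finset.mem_Icc]
  omega

lemma card_Icc_ceil_floor_le_two_mul {q c d δ : ℝ} (hδ : 0 ≤ δ) (hδ_le : 2 * δ ≤ 1)
    (h : 2 ≤ q * (d - c)) :
    ((Finset.Icc ⌈q * c - δ⌉ ⌊q * d + δ⌋).card : ℝ) ≤ 2 * (q * (d - c)) := by
  have hle : ⌈q * c - δ⌉ ≤ ⌊q * d + δ⌋ + 1 :=
    (Int.ceil_mono (by nlinarith)).trans (Int.ceil_le_floor_add_one _)
  have hcard := Int.card_Icc_of_le _ _ hle
  have hx := Int.le_ceil (q * c - δ)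
  have hy := Int.floor_le (q * d + δ)
  calc ((Finset.Icc ⌈q * c - δ⌉ ⌊q * d + δ⌋).card : ℝ)
      = ((⌊q * d + δ⌋ + 1 - ⌈q * c - δ⌉ : ℤ) : ℝ) := by rw [← hcard]; norm_cast
    _ ≤ 2 * (q * (d - c)) := by push_cast; nlinarith

lemma window_length (x : ℝ) {N q : ℝ} (hN : N ≠ 0) (hq : q ≠ 0) :
    (x + 1 / N) / q - (x - 1 / N) / q = 2 / (N * q) := by
  field_simp
  ring

theorem volume_window_inter_nearIntegerSet_tail_le {N k : ℕ} (hN : 2 ≤ N) (a : Fin (k + 1) → ℕ)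
    (ha : 0 < a 0) (hgrow : ∀ i : Fin (k + 1), ∀ h : i.1 + 1 < k + 1, N * a i ≤ a ⟨i.1 + 1, h⟩)
    (p : ℤ) :
    volume (Icc (((p : ℝ) - 1 / N) / a 0) ((p + 1 / N) / a 0) ∩
        nearIntegerSet (1 / N) (Fin.tail a)) ≤ ENNReal.ofReal (2 / (N * a 0) * (4 / N) ^ k) := by
  have hNpos : (0 : ℝ) < N := by positivity
  induction k generalizing p with
  | zero =>
    have hq : (0 : ℝ) < a 0 := by exact_mod_cast ha
    calc volume (Icc (((p : ℝ) - 1 / N) / a 0) ((p + 1 / N) / a 0) ∩ _)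
        ≤ volume (Icc (((p : ℝ) - 1 / N) / a 0) ((p + 1 / N) / a 0)) :=
          measure_mono inter_subset_left
      _ = ENNReal.ofReal (2 / (N * a 0) * (4 / N) ^ 0) := by
        rw [Real.volume_Icc, window_length p hNpos.ne' hq.ne', pow_zero, mul_one]
  | succ k ih =>
    have hq : (0 : ℝ) < a 0 := by exact_mod_cast ha
    have h1 : (N : ℝ) * a 0 ≤ a 1 := by exact_mod_cast hgrow 0 (by simp)
    have ha1 : 0 < a 1 := (Nat.mul_pos (by omega) ha).trans_le (hgrow 0 (by simp))
    have hq1 : (0 : ℝ) < a 1 := by exact_mod_cast ha1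
    rw [nearIntegerSet_succ]
    have hgrow_tail : ∀ i : Fin (k + 1), ∀ h : i.1 + 1 < k + 1,
        N * Fin.tail a i ≤ Fin.tail a ⟨i.1 + 1, h⟩ :=
      fun i h => hgrow i.succ (by rw [Fin.val_succ]; omega)
    refine (volume_Icc_inter_le_card_mul hq1 _ _
      (fun p' α hα h => mem_Icc_ceil_floor_of_abs_sub_le hq1.le hα h)
      (ih (Fin.tail a) ha1 hgrow_tail)).trans ?_
    have hwindow := window_length p hNpos.ne' hq.ne'
    have hratio : 2 ≤ (a 1 : ℝ) * (2 / (N * a 0)) := by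
      rw [← mul_div_assoc, le_div_iff₀ (by positivity)]
      linarith
    have hcard := card_Icc_ceil_floor_le_two_mul (q := a 1) (δ := 1 / N) (by positivity)
      (by rw [mul_one_div, div_le_one hNpos]; exact_mod_cast hN) (hwindow ▸ hratio)
    rw [hwindow] at hcard
    rw [← ENNReal.ofReal_natCast, ← ENNReal.ofReal_mul (Nat.cast_nonneg _)]
    apply ENNReal.ofReal_le_ofReal
    refine (mul_le_mul_of_nonneg_right hcard (by positivity)).trans_eq ?_
    change (2 : ℝ) * (a 1 * (2 / (N * a 0))) * (2 / (N * a 1) * (4 / N) ^ k) = _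
    rw [pow_succ]
    field_simp
    ring

/-- If `a 0, …, a (k-1)` are positive integers with `a (j+1) ≥ N * a j`, then the set of
`α ∈ [0,1]` with `‖α * a j‖ ≤ 1/N` for all `j` (distance to the nearest integer) has
Lebesgue measure at most `4^k / N^k`. -/
theorem stmt5 (k N : ℕ) (hN : 1 < N) (a : Fin k → ℕ) (ha : ∀ i, 0 < a i)
    (hgrow : ∀ i : Fin k, ∀ h : i.1 + 1 < k, N * a i ≤ a ⟨i.1 + 1, h⟩) :
    volume {α : ℝ | α ∈ Set.Icc (0 : ℝ) 1 ∧
        ∀ j, |α * a j - round (α * a j)| ≤ 1 / N}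
      ≤ ENNReal.ofReal ((4 : ℝ) ^ k / (N : ℝ) ^ k) := by
  change volume (Icc 0 1 ∩ nearIntegerSet (1 / N) a) ≤ _
  cases k with
  | zero =>
    calc volume (Icc 0 1 ∩ nearIntegerSet (1 / N) a) ≤ volume (Icc (0 : ℝ) 1) :=
          measure_mono inter_subset_left
      _ = _ := by simp [Real.volume_Icc]
  | succ k =>
    have hq : (0 : ℝ) < a 0 := by exact_mod_cast ha 0
    have h1N : 1 / (N : ℝ) < 1 := by
      rw [div_lt_one (by positivity)]
      exact_mod_cast hN
    rw [nearIntegerSet_succ]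
    refine (volume_Icc_inter_le_card_mul hq _ (Finset.Icc 0 (a 0 : ℤ))
      (fun p α hα h => mem_Icc_zero_of_abs_sub_le h1N hα h)
      (volume_window_inter_nearIntegerSet_tail_le hN a (ha 0) hgrow)).trans ?_
    have hcard : (Finset.Icc 0 (a 0 : ℤ)).card = a 0 + 1 := by simp
    rw [hcard, ← ENNReal.ofReal_natCast, ← ENNReal.ofReal_mul (Nat.cast_nonneg _)]
    apply ENNReal.ofReal_le_ofReal
    calc ((a 0 + 1 : ℕ) : ℝ) * (2 / (N * a 0) * (4 / N) ^ k)
        ≤ 2 * a 0 * (2 / (N * a 0) * (4 / N) ^ k) := by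
          gcongr
          push_cast
          linarith [(by exact_mod_cast ha 0 : (1 : ℝ) ≤ a 0)]
      _ = 4 ^ (k + 1) / N ^ (k + 1) := by
        rw [div_pow]
        field_simp
        ring
end

section
/- Let $c > 1$ and let $a : \mathbb{N} \to \mathbb{N}$ satisfy $a(x+1) > c \cdot a(x)$ for all $x$. Then for almost every $\alpha \in [0,1]$ (with respect to Lebesgue measure) the following holds: for every $\epsilon > 0$ there is a constant $C$ (depending on $c$, $\alpha$, $\epsilon$) such that for every positive integer $N$ and every real number $\beta$, the number of integers $x < N$ with $\|\alpha a(x) - \beta\| < 1/N$ is at most $C N^{\epsilon}$. -/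
/-!
Fix `N` and suppose that for some `β` at least `m * s` indices `x < N` satisfy
`‖α a(x) - β‖ < 1 / N`. Moving `β` to a grid point `j / N` (at the cost of doubling the radius)
and passing to one residue class modulo `s`, we find `m` such indices pairwise `s` apart; with
`c ^ s ≥ N` the frequencies `a(x)` then grow by a factor `N` from one chosen index to the next.
For such a set, the `α ∈ [0, 1]` satisfying all `m` conditions have measure at most `(24 / N) ^ m`:
each condition cuts every surviving interval into pieces of length `4 / (N a(x))`, and each piece
still contains a full period of the next condition. A union bound over `j` and the `m`-sets gives
measure at most `N * choose N m * (24 / N) ^ m ≤ N⁻²` for `m ≈ 3 log N`, so by Borel–Cantelli, for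
almost every `α` the count is eventually below `m * s = O((log N) ^ 2) = O(N ^ ε)`.
-/

open MeasureTheory Finset Filter
open scoped ENNReal

namespace UnitAddCircle

lemma norm_coe_le_abs_sub_intCast (y : ℝ) (z : ℤ) : ‖(y : UnitAddCircle)‖ ≤ |y - z| :=
  norm_eq ▸ round_le y z

lemma norm_coe_sub_le (x y z : ℝ) :
    ‖((x - z : ℝ) : UnitAddCircle)‖ ≤
      ‖((x - y : ℝ) : UnitAddCircle)‖ + ‖((y - z : ℝ) : UnitAddCircle)‖ := by
  rw [← sub_add_sub_cancel x y z, AddCircle.coe_add]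
  exact norm_add_le _ _

end UnitAddCircle

lemma exists_lt_norm_sub_div_lt (β : ℝ) {N : ℕ} (hN : 0 < N) :
    ∃ j < N, ‖((β - j / N : ℝ) : UnitAddCircle)‖ < 1 / N := by
  have hN' : (0 : ℝ) < N := by exact_mod_cast hN
  have hfr : 0 ≤ N * Int.fract β := mul_nonneg hN'.le (Int.fract_nonneg β)
  refine ⟨⌊N * Int.fract β⌋₊, ?_, ?_⟩
  · rw [Nat.floor_lt hfr]
    nlinarith [Int.fract_lt_one β]
  · refine (UnitAddCircle.norm_coe_le_abs_sub_intCast _ ⌊β⌋).trans_lt ?_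
    have hlo := Nat.floor_le hfr
    have hhi := Nat.lt_floor_add_one (N * Int.fract β)
    rw [show β - ⌊N * Int.fract β⌋₊ / N - ⌊β⌋ = (N * Int.fract β - ⌊N * Int.fract β⌋₊) / N by
      rw [Int.fract]; field_simp; ring, abs_of_nonneg (by apply div_nonneg <;> linarith)]
    gcongr
    linarith

lemma cast_card_Icc_ceil_floor_le {x y : ℝ} (h : x ≤ y + 1) :
    (#(Finset.Icc ⌈x⌉ ⌊y⌋) : ℝ) ≤ y - x + 1 := by
  have hcard : ((#(Finset.Icc ⌈x⌉ ⌊y⌋) : ℤ) : ℝ) = max ((⌊y⌋ + 1 - ⌈x⌉ : ℤ) : ℝ) 0 := by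
    rw [Int.card_Icc, Int.toNat_eq_max]; push_cast; rfl
  rw [← Int.cast_natCast, hcard, max_le_iff]
  push_cast
  constructor <;> linarith [Int.floor_le y, Int.le_ceil x]

def CoverableBy (S : Set ℝ) (n L : ℝ) : Prop :=
  ∃ U : Finset ℝ, (#U : ℝ) ≤ n ∧ S ⊆ ⋃ u ∈ U, Set.Icc u (u + L)

namespace CoverableBy

variable {S T : Set ℝ} {n L : ℝ}

lemma nonneg (h : CoverableBy S n L) : 0 ≤ n :=
  let ⟨_, hU, _⟩ := h
  (Nat.cast_nonneg _).trans hU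

lemma subset (h : CoverableBy S n L) (hTS : T ⊆ S) : CoverableBy T n L :=
  let ⟨U, hU, hS⟩ := h
  ⟨U, hU, hTS.trans hS⟩

lemma volume_le (h : CoverableBy S n L) (hL : 0 ≤ L) : volume S ≤ ENNReal.ofReal (n * L) := by
  obtain ⟨U, hU, hS⟩ := h
  calc volume S ≤ volume (⋃ u ∈ U, Set.Icc u (u + L)) := measure_mono hS
    _ ≤ ∑ u ∈ U, volume (Set.Icc u (u + L)) := measure_biUnion_finset_le _ _
    _ = ENNReal.ofReal (#U * L) := by
      simp [Real.volume_Icc, ENNReal.ofReal_mul]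
    _ ≤ ENNReal.ofReal (n * L) := by gcongr

end CoverableBy

lemma inter_setOf_norm_lt_subset {u L A : ℝ} (hA : 0 < A) (β δ : ℝ) :
    Set.Icc u (u + L) ∩ {α | ‖((α * A - β : ℝ) : UnitAddCircle)‖ < δ} ⊆
      ⋃ r ∈ Finset.Icc ⌈u * A - β - δ⌉ ⌊(u + L) * A - β + δ⌋,
        Set.Icc ((r + β - δ) / A) ((r + β - δ) / A + 2 * δ / A) := by
  rintro α ⟨⟨hu, huL⟩, hα : ‖_‖ < δ⟩
  rw [UnitAddCircle.norm_eq, abs_lt] at hα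
  have h1 : u * A ≤ α * A := by gcongr
  have h2 : α * A ≤ (u + L) * A := by gcongr
  refine Set.mem_biUnion (x := round (α * A - β)) ?_ ⟨?_, ?_⟩
  · rw [Finset.mem_coe, Finset.mem_Icc, Int.ceil_le, Int.le_floor]
    constructor <;> linarith
  · rw [div_le_iff₀ hA]; linarith
  · rw [← add_div, le_div_iff₀ hA]; linarith

namespace CoverableBy

variable {S : Set ℝ} {n L : ℝ}

lemma inter_setOf_norm_lt (h : CoverableBy S n L) (hL : 0 ≤ L) {A : ℝ} (hA : 0 < A)
    (β : ℝ) {δ : ℝ} (hδ : 0 ≤ δ) :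
    CoverableBy (S ∩ {α | ‖((α * A - β : ℝ) : UnitAddCircle)‖ < δ})
      (n * (L * A + 2 * δ + 1)) (2 * δ / A) := by
  obtain ⟨U, hU, hS⟩ := h
  classical
  refine ⟨U.biUnion fun u => (Finset.Icc ⌈u * A - β - δ⌉ ⌊(u + L) * A - β + δ⌋).image
    fun r : ℤ => (r + β - δ) / A, ?_, ?_⟩
  · have hK : ∀ u ∈ U, (#((Finset.Icc ⌈u * A - β - δ⌉ ⌊(u + L) * A - β + δ⌋).image
        fun r : ℤ => (r + β - δ) / A) : ℝ) ≤ L * A + 2 * δ + 1 := fun u _ => by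
      refine (Nat.cast_le.2 card_image_le).trans ((cast_card_Icc_ceil_floor_le ?_).trans_eq ?_)
      · nlinarith
      · ring
    calc (#(U.biUnion _) : ℝ) ≤ ∑ u ∈ U, (#((Finset.Icc ⌈u * A - β - δ⌉ ⌊(u + L) * A - β + δ⌋).image
          fun r : ℤ => (r + β - δ) / A) : ℝ) := by exact_mod_cast card_biUnion_le
      _ ≤ #U * (L * A + 2 * δ + 1) := (sum_le_card_nsmul _ _ _ hK).trans_eq (nsmul_eq_mul _ _)
      _ ≤ n * (L * A + 2 * δ + 1) := by gcongr
  · rintro α ⟨hαS, hα⟩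
    obtain ⟨u, hu, hαu⟩ := Set.mem_iUnion₂.1 (hS hαS)
    obtain ⟨r, hr, hαr⟩ := Set.mem_iUnion₂.1 (inter_setOf_norm_lt_subset hA β δ ⟨hαu, hα⟩)
    exact Set.mem_biUnion (mem_biUnion.2 ⟨u, hu, mem_image_of_mem _ hr⟩) hαr

end CoverableBy

/-- The last conjunct, saying that the intervals are long enough to contain a full period of every
later condition, is what keeps the induction going. -/
lemma exists_coverableBy_of_forall_le_mul (w : ℕ → ℝ) (β : ℝ) {δ : ℝ} (hδ : 0 ≤ δ)
    (S : Finset ℕ) (hw : ∀ x ∈ S, 1 ≤ w x) (hS : ∀ x ∈ S, ∀ y ∈ S, x < y → w x ≤ 2 * δ * w y) :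
    ∃ n L, 0 ≤ L ∧ n * L ≤ (4 * δ * (1 + δ)) ^ #S ∧
      CoverableBy (Set.Icc 0 1 ∩ {α | ∀ x ∈ S, ‖((α * w x - β : ℝ) : UnitAddCircle)‖ < δ}) n L ∧
      ∀ y, 1 ≤ w y → (∀ x ∈ S, w x ≤ 2 * δ * w y) → 1 ≤ L * w y := by
  classical
  induction S using Finset.induction_on_max with
  | empty =>
    refine ⟨1, 1, zero_le_one, by simp, ⟨{0}, by simp, fun α hα => ?_⟩, fun y hy _ => by simpa⟩
    simpa using hα.1
  | insert a S haS ih =>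
    obtain ⟨n, L, hL, hnL, hcov, hlong⟩ := ih (fun x hx => hw x (mem_insert_of_mem hx))
      fun x hx y hy => hS x (mem_insert_of_mem hx) y (mem_insert_of_mem hy)
    have hn := hcov.nonneg
    have ha : 1 ≤ w a := hw a (mem_insert_self a S)
    have hLa : 1 ≤ L * w a := hlong a ha fun x hx =>
      hS x (mem_insert_of_mem hx) a (mem_insert_self a S) (haS x hx)
    refine ⟨n * (L * w a + 2 * δ + 1), 2 * δ / w a, by positivity, ?_, ?_, ?_⟩
    · rw [card_insert_of_notMem fun h => (haS a h).false, pow_succ]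
      calc n * (L * w a + 2 * δ + 1) * (2 * δ / w a)
          ≤ n * (L * w a * (2 + 2 * δ)) * (2 * δ / w a) := by gcongr; nlinarith
        _ = n * L * (4 * δ * (1 + δ)) := by field_simp; ring
        _ ≤ _ := by gcongr
    · refine (hcov.inter_setOf_norm_lt hL (by linarith) β hδ).subset fun α hα => ?_
      exact ⟨⟨hα.1, fun x hx => hα.2 x (mem_insert_of_mem hx)⟩, hα.2 a (mem_insert_self a S)⟩
    · intro y _ hy
      rw [div_mul_eq_mul_div, le_div_iff₀ (by linarith), one_mul]
      exact hy a (mem_insert_self a S)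

lemma volume_inter_setOf_forall_norm_lt_le (w : ℕ → ℝ) (β : ℝ) {δ : ℝ} (hδ : 0 ≤ δ)
    (S : Finset ℕ) (hw : ∀ x ∈ S, 1 ≤ w x) (hS : ∀ x ∈ S, ∀ y ∈ S, x < y → w x ≤ 2 * δ * w y) :
    volume (Set.Icc 0 1 ∩ {α | ∀ x ∈ S, ‖((α * w x - β : ℝ) : UnitAddCircle)‖ < δ}) ≤
      ENNReal.ofReal ((4 * δ * (1 + δ)) ^ #S) := by
  obtain ⟨n, L, hL, hnL, hcov, -⟩ := exists_coverableBy_of_forall_le_mul w β hδ S hw hS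
  exact (hcov.volume_le hL).trans (ENNReal.ofReal_le_ofReal hnL)

lemma exists_spaced_subset_card_eq {s m : ℕ} (hs : 0 < s) {T : Finset ℕ}
    (h : m * s ≤ #T) : ∃ S ⊆ T, #S = m ∧ ∀ x ∈ S, ∀ y ∈ S, x < y → x + s ≤ y := by
  obtain ⟨r, -, hr⟩ := exists_le_card_fiber_of_mul_le_card_of_maps_to (s := T) (f := (· % s))
    (n := m) (fun x _ => mem_range.2 (Nat.mod_lt x hs)) ⟨0, mem_range.2 hs⟩
    (by rwa [card_range, mul_comm])
  obtain ⟨S, hST, hS⟩ := exists_subset_card_eq hr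
  refine ⟨S, hST.trans (filter_subset _ _), hS, fun x hx y hy hxy => ?_⟩
  have hmod : x ≡ y [MOD s] := (mem_filter.1 (hST hx)).2.trans (mem_filter.1 (hST hy)).2.symm
  have := Nat.le_of_dvd (Nat.sub_pos_of_lt hxy) ((Nat.modEq_iff_dvd' hxy.le).1 hmod)
  omega

lemma measure_biUnion_finset_le_card_mul {α ι : Type*} [MeasurableSpace α] (μ : Measure α)
    (I : Finset ι) (F : ι → Set α) {b : ℝ≥0∞} (h : ∀ i ∈ I, μ (F i) ≤ b) :
    μ (⋃ i ∈ I, F i) ≤ #I * b :=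
  (measure_biUnion_finset_le I F).trans ((sum_le_card_nsmul I _ b h).trans_eq (nsmul_eq_mul _ _))

noncomputable def closeIndices (a : ℕ → ℝ) (α β : ℝ) (N : ℕ) : Finset ℕ :=
  (range N).filter fun x => ‖((α * a x - β : ℝ) : UnitAddCircle)‖ < 1 / N

lemma card_closeIndices_le (a : ℕ → ℝ) (α β : ℝ) (N : ℕ) : #(closeIndices a α β N) ≤ N :=
  (card_filter_le _ _).trans_eq (card_range N)

lemma choose_mul_div_pow_le_exp_neg (N m : ℕ) {b : ℝ} (hb : 0 < b)
    (hm : b * Real.exp 1 ^ 2 ≤ m) : N.choose m * (b / N) ^ m ≤ Real.exp (-m) := by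
  have hm0 : (0 : ℝ) < m := lt_of_lt_of_le (by positivity) hm
  calc N.choose m * (b / N) ^ m ≤ N ^ m / m.factorial * (b / N) ^ m := by
        gcongr; exact Nat.choose_le_pow_div m N
    _ = b ^ m / m.factorial * (N ^ m / N ^ m) := by rw [div_pow]; ring
    _ ≤ b ^ m / m.factorial := mul_le_of_le_one_right (by positivity) (div_self_le_one _)
    _ = (b / m) ^ m * (m ^ m / m.factorial) := by rw [div_pow]; field_simp
    _ ≤ (b / m) ^ m * Real.exp 1 ^ m := by
        rw [Real.exp_one_pow]; gcongr; exact Real.pow_div_factorial_le_exp _ hm0.le m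
    _ = (b * Real.exp 1 / m) ^ m := by rw [← mul_pow]; ring
    _ ≤ Real.exp (-1) ^ m := by
        gcongr
        rw [Real.exp_neg, div_le_iff₀ hm0, ← div_eq_inv_mul, le_div_iff₀ (Real.exp_pos 1)]
        linarith
    _ = Real.exp (-m) := by rw [← Real.exp_nat_mul]; ring_nf

lemma exp_one_sq_le_eight : Real.exp 1 ^ 2 ≤ 8 := by
  nlinarith [Real.exp_one_lt_d9, Real.exp_pos 1]

/-- `m = ⌈3 log N⌉ + 192` makes the union bound `N * choose N m * (24 / N) ^ m` at most `1 / N ^ 2`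
(as `24 e² ≤ 192`), and `s = ⌈log_c N⌉ + 1` makes `c ^ s ≥ N`. -/
noncomputable def threshold (c : ℝ) (N : ℕ) : ℕ :=
  (⌈3 * Real.log N⌉₊ + 192) * (⌈Real.logb c N⌉₊ + 1)

lemma le_pow_ceil_logb_add_one (hc : 1 < c) {N : ℕ} (hN : 0 < N) :
    (N : ℝ) ≤ c ^ (⌈Real.logb c N⌉₊ + 1) := by
  calc (N : ℝ) = c ^ Real.logb c N :=
        (Real.rpow_logb (by linarith) hc.ne' (by exact_mod_cast hN)).symm
    _ ≤ c ^ ((⌈Real.logb c N⌉₊ + 1 : ℕ) : ℝ) := by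
      gcongr
      · exact hc.le
      · push_cast; linarith [Nat.le_ceil (Real.logb c N)]
    _ = c ^ (⌈Real.logb c N⌉₊ + 1) := Real.rpow_natCast _ _

lemma exp_neg_le_one_div_pow_three {N : ℕ} (hN : 0 < N) {m : ℝ} (hm : 3 * Real.log N ≤ m) :
    Real.exp (-m) ≤ 1 / (N : ℝ) ^ 3 := by
  have hN' : (0 : ℝ) < N := by exact_mod_cast hN
  rw [Real.exp_neg, one_div]
  gcongr
  calc (N : ℝ) ^ 3 = Real.exp (3 * Real.log N) := by
        rw [show (3 : ℝ) = (3 : ℕ) by norm_num, ← Real.log_pow, Real.exp_log (by positivity)]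
    _ ≤ Real.exp m := Real.exp_le_exp.2 hm

lemma exists_threshold_le_mul_rpow {c : ℝ} (hc : 1 < c) {ε : ℝ} (hε : 0 < ε) :
    ∃ C, 0 ≤ C ∧ ∀ N : ℕ, 1 ≤ N → (threshold c N : ℝ) ≤ C * N ^ ε := by
  have hlogc := Real.log_pos hc
  refine ⟨(6 / ε + 193) * (2 / (ε * Real.log c) + 2), by positivity, fun N hN => ?_⟩
  have hN' : (1 : ℝ) ≤ N := by exact_mod_cast hN
  have hlogN : 0 ≤ Real.log N := Real.log_nonneg hN'
  set Q := (N : ℝ) ^ (ε / 2)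
  have hQ : 1 ≤ Q := Real.one_le_rpow hN' (by positivity)
  have hlogQ : Real.log N ≤ Q / (ε / 2) := Real.log_le_rpow_div (Nat.cast_nonneg N) (by positivity)
  have hm : ((⌈3 * Real.log N⌉₊ + 192 : ℕ) : ℝ) ≤ (6 / ε + 193) * Q := by
    have := Nat.ceil_lt_add_one (by positivity : 0 ≤ 3 * Real.log N)
    have : 6 / ε * Q = 3 * (Q / (ε / 2)) := by field_simp; ring
    push_cast
    nlinarith
  have hs : ((⌈Real.logb c N⌉₊ + 1 : ℕ) : ℝ) ≤ (2 / (ε * Real.log c) + 2) * Q := by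
    have := Nat.ceil_lt_add_one (Real.logb_nonneg hc hN')
    have : Real.logb c N ≤ 2 / (ε * Real.log c) * Q := by
      rw [Real.logb, show 2 / (ε * Real.log c) * Q = Q / (ε / 2) / Real.log c by field_simp]
      gcongr
    push_cast
    nlinarith
  calc (threshold c N : ℝ)
        = ((⌈3 * Real.log N⌉₊ + 192 : ℕ) : ℝ) * ((⌈Real.logb c N⌉₊ + 1 : ℕ) : ℝ) := by
        rw [threshold, Nat.cast_mul]
    _ ≤ (6 / ε + 193) * Q * ((2 / (ε * Real.log c) + 2) * Q) := by gcongr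
    _ = (6 / ε + 193) * (2 / (ε * Real.log c) + 2) * N ^ ε := by
        rw [show (N : ℝ) ^ ε = Q * Q by rw [← Real.rpow_add (by positivity)]; ring_nf]
        ring

section Lacunary

variable {a : ℕ → ℝ} {c : ℝ}

lemma pow_mul_le_of_add_le (ha : ∀ n, 0 ≤ a n) (hc : 1 ≤ c) (hlac : ∀ n, c * a n ≤ a (n + 1))
    {x y d : ℕ} (hxy : x + d ≤ y) : c ^ d * a x ≤ a y := by
  have hmono : Monotone a := monotone_nat_of_le_succ fun n =>
    (le_mul_of_one_le_left (ha n) hc).trans (hlac n)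
  refine le_trans ?_ (hmono hxy)
  induction d with
  | zero => simp
  | succ d ih =>
    calc c ^ (d + 1) * a x = c * (c ^ d * a x) := by ring
      _ ≤ c * a (x + d) := by gcongr; exact ih (by omega)
      _ ≤ a (x + (d + 1)) := hlac _

lemma volume_setOf_exists_mul_le_card_closeIndices_le (ha : ∀ n, 1 ≤ a n) (hc : 1 ≤ c)
    (hlac : ∀ n, c * a n ≤ a (n + 1)) {N s : ℕ} (hN : 0 < N) (hs : 0 < s) (hcs : (N : ℝ) ≤ c ^ s)
    (m : ℕ) :
    volume.restrict (Set.Icc 0 1) {α | ∃ β, m * s ≤ #(closeIndices a α β N)} ≤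
      ENNReal.ofReal (N * (N.choose m * (24 / N) ^ m)) := by
  have hN' : (0 : ℝ) < N := by exact_mod_cast hN
  set P := ((range N).powersetCard m).filter fun S => ∀ x ∈ S, ∀ y ∈ S, x < y → x + s ≤ y
  set G : ℕ → Finset ℕ → Set ℝ := fun j S =>
    Set.Icc 0 1 ∩ {α | ∀ x ∈ S, ‖((α * a x - j / N : ℝ) : UnitAddCircle)‖ < 2 / N}
  have hcover : {α | ∃ β, m * s ≤ #(closeIndices a α β N)} ∩ Set.Icc 0 1 ⊆
      ⋃ j ∈ range N, ⋃ S ∈ P, G j S := by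
    rintro α ⟨⟨β, hβ⟩, hα⟩
    obtain ⟨j, hj, hβj⟩ := exists_lt_norm_sub_div_lt β hN
    set T := (range N).filter fun x => ‖((α * a x - j / N : ℝ) : UnitAddCircle)‖ < 2 / N
    have hT : closeIndices a α β N ⊆ T := fun x hx => by
      obtain ⟨hxN, hx⟩ := mem_filter.1 hx
      refine mem_filter.2 ⟨hxN, (UnitAddCircle.norm_coe_sub_le _ β _).trans_lt ?_⟩
      linarith [show (2 : ℝ) / N = 1 / N + 1 / N by ring]
    obtain ⟨S, hST, hSm, hSs⟩ := exists_spaced_subset_card_eq hs (hβ.trans (card_le_card hT))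
    refine Set.mem_biUnion (mem_range.2 hj) (Set.mem_biUnion (x := S) ?_ ⟨hα, fun x hx => ?_⟩)
    · exact mem_filter.2 ⟨mem_powersetCard.2 ⟨hST.trans (filter_subset _ _), hSm⟩, hSs⟩
    · exact (mem_filter.1 (hST hx)).2
  have hG : ∀ j ∈ range N, ∀ S ∈ P, volume (G j S) ≤ ENNReal.ofReal ((24 / N) ^ m) := by
    intro j _ S hS
    obtain ⟨hSN, hSs⟩ := mem_filter.1 hS
    rw [← (mem_powersetCard.1 hSN).2]
    refine (volume_inter_setOf_forall_norm_lt_le a _ (by positivity) S (fun x _ => ha x)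
      fun x hx y hy hxy => ?_).trans (ENNReal.ofReal_le_ofReal ?_)
    · have hpow := pow_mul_le_of_add_le (fun n => zero_le_one.trans (ha n)) hc hlac
        (hSs x hx y hy hxy)
      have : N * a x ≤ a y := (mul_le_mul_of_nonneg_right hcs (by linarith [ha x])).trans hpow
      rw [show 2 * (2 / N) * a y = 4 * a y / N by ring, le_div_iff₀ hN']
      nlinarith [ha x]
    · have : (2 : ℝ) / N ≤ 2 := div_le_self zero_le_two (by exact_mod_cast hN)
      gcongr
      calc (4 : ℝ) * (2 / N) * (1 + 2 / N) ≤ 4 * (2 / N) * 3 := by gcongr; linarith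
        _ = 24 / N := by ring
  rw [Measure.restrict_apply' measurableSet_Icc]
  calc volume ({α | ∃ β, m * s ≤ #(closeIndices a α β N)} ∩ Set.Icc 0 1)
      ≤ volume (⋃ j ∈ range N, ⋃ S ∈ P, G j S) := measure_mono hcover
    _ ≤ #(range N) * (#P * ENNReal.ofReal ((24 / N) ^ m)) :=
      measure_biUnion_finset_le_card_mul _ _ _ fun j hj =>
        measure_biUnion_finset_le_card_mul _ _ _ (hG j hj)
    _ ≤ N * (N.choose m * ENNReal.ofReal ((24 / N) ^ m)) := by
      rw [card_range]
      gcongr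
      exact_mod_cast (card_filter_le _ _).trans_eq (by rw [card_powersetCard, card_range])
    _ = ENNReal.ofReal (N * (N.choose m * (24 / N) ^ m)) := by
      rw [ENNReal.ofReal_mul (by positivity), ENNReal.ofReal_mul (by positivity),
        ENNReal.ofReal_natCast, ENNReal.ofReal_natCast]

lemma volume_setOf_exists_threshold_le_card_le (ha : ∀ n, 1 ≤ a n) (hc : 1 < c)
    (hlac : ∀ n, c * a n ≤ a (n + 1)) (N : ℕ) :
    volume.restrict (Set.Icc 0 1) {α | ∃ β, threshold c N ≤ #(closeIndices a α β N)} ≤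
      ENNReal.ofReal (1 / (N : ℝ) ^ 2) := by
  rcases N.eq_zero_or_pos with rfl | hN
  · simp [closeIndices, threshold]
  have hN' : (0 : ℝ) < N := by exact_mod_cast hN
  set m := ⌈3 * Real.log N⌉₊ + 192
  have hm : 3 * Real.log N ≤ m := by
    simp only [m]; push_cast; linarith [Nat.le_ceil (3 * Real.log N)]
  have hm24 : 24 * Real.exp 1 ^ 2 ≤ m := by
    simp only [m]
    push_cast
    nlinarith [exp_one_sq_le_eight, Nat.cast_nonneg (α := ℝ) ⌈3 * Real.log N⌉₊]
  refine (volume_setOf_exists_mul_le_card_closeIndices_le ha hc.le hlac hN (Nat.succ_pos _)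
    (le_pow_ceil_logb_add_one hc hN) m).trans (ENNReal.ofReal_le_ofReal ?_)
  calc (N : ℝ) * (N.choose m * (24 / N) ^ m) ≤ N * (1 / N ^ 3) := by
        gcongr
        exact (choose_mul_div_pow_le_exp_neg N m (by norm_num) hm24).trans
          (exp_neg_le_one_div_pow_three hN hm)
    _ = 1 / N ^ 2 := by field_simp

lemma ae_eventually_card_closeIndices_lt (ha : ∀ n, 1 ≤ a n) (hc : 1 < c)
    (hlac : ∀ n, c * a n ≤ a (n + 1)) :
    ∀ᵐ α ∂volume.restrict (Set.Icc (0 : ℝ) 1), ∀ᶠ N in atTop,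
      ∀ β, #(closeIndices a α β N) < threshold c N := by
  have hsum : ∑' N : ℕ, volume.restrict (Set.Icc (0 : ℝ) 1)
      {α | ∃ β, threshold c N ≤ #(closeIndices a α β N)} ≠ ∞ := by
    refine ne_top_of_le_ne_top ?_
      (ENNReal.tsum_le_tsum fun N => volume_setOf_exists_threshold_le_card_le ha hc hlac N)
    rw [← ENNReal.ofReal_tsum_of_nonneg (fun N => by positivity)
      (Real.summable_one_div_nat_pow.2 one_lt_two)]
    exact ENNReal.ofReal_ne_top
  filter_upwards [ae_eventually_notMem hsum] with α hα
  filter_upwards [hα] with N hN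
  simpa using hN

end Lacunary

/-- Small fractional parts: for a lacunary sequence `a` with ratio `c > 1`, for almost
every `α ∈ [0,1]`, for every `ε > 0` there is a constant `C` such that for every `N ≥ 1`
and every `β`, the number of `x < N` with `‖α * a x - β‖ < 1/N` is at most `C * N^ε`,
where `‖·‖` is the distance to the nearest integer. -/
theorem stmt6 (c : ℝ) (hc : 1 < c) (a : ℕ → ℕ) (ha : ∀ n, 0 < a n)
    (hlac : ∀ n, c * a n < a (n + 1)) :
    ∀ᵐ α ∂(volume.restrict (Set.Icc (0 : ℝ) 1)),
      ∀ ε : ℝ, 0 < ε → ∃ C : ℝ, ∀ N : ℕ, 1 ≤ N → ∀ β : ℝ,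
        (Set.ncard {x : ℕ | x < N ∧ |α * a x - β - round (α * a x - β)| < 1 / N} : ℝ)
          ≤ C * (N : ℝ) ^ ε := by
  have hset : ∀ (α β : ℝ) (N : ℕ), {x : ℕ | x < N ∧ |α * a x - β - round (α * a x - β)| < 1 / N} =
      closeIndices (fun n => a n) α β N := fun α β N => by
    ext x; simp only [closeIndices, coe_filter, mem_range, UnitAddCircle.norm_eq]
  filter_upwards [ae_eventually_card_closeIndices_lt (fun n => Nat.one_le_cast.2 (ha n)) hc
    fun n => (hlac n).le] with α hα
  obtain ⟨N₀, hN₀⟩ := eventually_atTop.1 hα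
  intro ε hε
  obtain ⟨C, hC, hthreshold⟩ := exists_threshold_le_mul_rpow hc hε
  refine ⟨N₀ + C, fun N hN β => ?_⟩
  have hNε : 1 ≤ (N : ℝ) ^ ε := Real.one_le_rpow (by exact_mod_cast hN) hε.le
  rw [hset, Set.ncard_coe_finset]
  rcases lt_or_ge N N₀ with hlt | hge
  · calc (#(closeIndices (fun n => a n) α β N) : ℝ) ≤ N₀ := by
          exact_mod_cast (card_closeIndices_le _ α β N).trans hlt.le
      _ ≤ (N₀ + C) * N ^ ε := by nlinarith
  · calc (#(closeIndices (fun n => a n) α β N) : ℝ) ≤ C * N ^ ε :=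
          le_trans (by exact_mod_cast (hN₀ N hge β).le) (hthreshold N hN)
      _ ≤ (N₀ + C) * N ^ ε := by nlinarith [Nat.cast_nonneg (α := ℝ) N₀]
end
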